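/- arXiv:1312.4393 — 13 statements merged into one kernel-verified Lean document; each statement's English description precedes it below -/
import Mathlib

section
/- For every POVM (F i)_{i ∈ ι} with finite outcome set ι on ℂ^n there exists a measurement scheme realizing it: there are m ∈ ℕ (m ≥ 1), a unit vector φ ∈ ℂ^m, a unitary (nm)×(nm) matrix U acting on ℂ^n ⊗ ℂ^m (tensor products of matrices taken as Kronecker products), and a family (Z i)_{i ∈ ι} of orthogonal projections on ℂ^m with ∑_i Z i = 1, such that for every density matrix ρ on ℂ^n and every i ∈ ι one has Tr(ρ · F i) = Tr((ρ ⊗ |φ⟩⟨φ|) · Uᴴ (1 ⊗ Z i) U). -/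
open Matrix Kronecker
open scoped ComplexOrder

/-- Every POVM with finite outcome set on ℂ^n admits a measurement scheme
(probe space ℂ^m, unit probe vector φ, coupling unitary U, projection-valued
pointer observable Z) implementing it. -/
theorem povm_has_measurement_scheme {n : ℕ} (hn : 0 < n) {ι : Type} [Fintype ι]
    (F : ι → Matrix (Fin n) (Fin n) ℂ)
    (hFpos : ∀ i, (F i).PosSemidef) (hFsum : ∑ i, F i = 1) :
    ∃ (m : ℕ) (_ : 1 ≤ m) (φ : Fin m → ℂ)
      (U : Matrix (Fin n × Fin m) (Fin n × Fin m) ℂ)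
      (Z : ι → Matrix (Fin m) (Fin m) ℂ),
        (∑ j, star (φ j) * φ j) = 1 ∧
        U ∈ Matrix.unitaryGroup (Fin n × Fin m) ℂ ∧
        (∀ i, (Z i).IsHermitian ∧ Z i * Z i = Z i) ∧
        (∑ i, Z i) = 1 ∧
        (∀ ρ : Matrix (Fin n) (Fin n) ℂ, ρ.PosSemidef → ρ.trace = 1 → ∀ i,
          (ρ * F i).trace =
            ((ρ ⊗ₖ Matrix.vecMulVec φ (star φ)) *
              (Uᴴ * ((1 : Matrix (Fin n) (Fin n) ℂ) ⊗ₖ Z i) * U)).trace) := by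
  -- ι is nonempty
  have hne : Nonempty ι := by
    rcases isEmpty_or_nonempty ι with h | h
    · exfalso
      have : (0 : Matrix (Fin n) (Fin n) ℂ) = 1 := by
        rw [← hFsum]; simp
      have := congrFun (congrFun this ⟨0, hn⟩) ⟨0, hn⟩
      simp [Matrix.one_apply] at this
    · exact h
  set m := Fintype.card ι with hm
  have hm1 : 1 ≤ m := Fintype.card_pos
  let σ : ι ≃ Fin m := Fintype.equivFin ι
  let k₀ : Fin m := ⟨0, hm1⟩
  let φ : Fin m → ℂ := fun k => if k = k₀ then 1 else 0
  let Z : ι → Matrix (Fin m) (Fin m) ℂ := fun i => Matrix.single (σ i) (σ i) 1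
  -- square roots
  have hsq : ∀ i, ∃ B : Matrix (Fin n) (Fin n) ℂ, Bᴴ * B = F i := fun i => by
    open MatrixOrder in
    obtain ⟨B, hB⟩ := CStarAlgebra.nonneg_iff_eq_star_mul_self.mp (hFpos i).nonneg
    exact ⟨B, hB.symm⟩
  let A : ι → Matrix (Fin n) (Fin n) ℂ := fun i => (hsq i).choose
  have hAF : ∀ i, (A i)ᴴ * A i = F i := fun i => (hsq i).choose_spec
  -- the isometry columns
  let v : Fin n × Fin m → EuclideanSpace ℂ (Fin n × Fin m) :=
    fun q => if q.2 = k₀ then WithLp.toLp 2 (fun p : Fin n × Fin m => A (σ.symm p.2) p.1 q.1) else 0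
  have hVcol : ∀ c c' : Fin n,
      (∑ p : Fin n × Fin m, (starRingEnd ℂ) (A (σ.symm p.2) p.1 c) * A (σ.symm p.2) p.1 c')
        = (if c = c' then 1 else 0) := by
    intro c c'
    have : (∑ p : Fin n × Fin m, (starRingEnd ℂ) (A (σ.symm p.2) p.1 c) * A (σ.symm p.2) p.1 c')
        = ∑ k : Fin m, ((A (σ.symm k))ᴴ * A (σ.symm k)) c c' := by
      rw [Fintype.sum_prod_type_right]
      refine Finset.sum_congr rfl fun k _ => ?_
      simp [Matrix.mul_apply, Matrix.conjTranspose_apply]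
    rw [this]
    have h2 : ∑ k : Fin m, ((A (σ.symm k))ᴴ * A (σ.symm k)) c c'
        = ∑ i : ι, (F i) c c' := by
      rw [← Equiv.sum_comp σ (fun k => ((A (σ.symm k))ᴴ * A (σ.symm k)) c c')]
      refine Finset.sum_congr rfl fun i _ => ?_
      simp [hAF]
    rw [h2, ← Matrix.sum_apply, hFsum, Matrix.one_apply]
  -- orthonormality on the subspace
  have hvon : Orthonormal ℂ ({q : Fin n × Fin m | q.2 = k₀}.restrict v) := by
    rw [orthonormal_iff_ite]
    rintro ⟨⟨c, k⟩, hk⟩ ⟨⟨c', k'⟩, hk'⟩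
    simp only [Set.mem_setOf_eq] at hk hk'
    subst hk; subst hk'
    change inner ℂ (v (c, k₀)) (v (c', k₀)) = _
    have : (inner ℂ (v (c, k₀)) (v (c', k₀)) : ℂ)
        = ∑ p : Fin n × Fin m,
            (starRingEnd ℂ) (A (σ.symm p.2) p.1 c) * A (σ.symm p.2) p.1 c' := by
      simp only [v, if_pos rfl, PiLp.inner_apply, RCLike.inner_apply]
      exact Finset.sum_congr rfl fun _ _ => mul_comm _ _
    rw [this, hVcol]
    simp [Subtype.ext_iff, Prod.ext_iff]
  obtain ⟨b, hb⟩ := hvon.exists_orthonormalBasis_extension_of_card_eq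
    (by simp) 
  let U : Matrix (Fin n × Fin m) (Fin n × Fin m) ℂ := Matrix.of fun r q => b q r
  have hUentry : ∀ (a c : Fin n) (i : ι), U (a, σ i) (c, k₀) = A i a c := by
    intro a c i
    have := hb (c, k₀) (by simp)
    simp only [U, Matrix.of_apply, this, v, if_pos rfl]
    simp
  have hUunit : U ∈ Matrix.unitaryGroup (Fin n × Fin m) ℂ := by
    rw [Matrix.mem_unitaryGroup_iff']
    ext p q
    have hob := (orthonormal_iff_ite.mp b.orthonormal) p q
    have : (star U * U) p q = (inner ℂ (b p) (b q) : ℂ) := by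
      simp [Matrix.mul_apply, Matrix.star_apply, U, PiLp.inner_apply, RCLike.inner_apply]
      exact Finset.sum_congr rfl fun _ _ => mul_comm _ _
    rw [this, hob, Matrix.one_apply]
  refine ⟨m, hm1, φ, U, Z, ?_, hUunit, ?_, ?_, ?_⟩
  · simp [φ, apply_ite]
  · intro i
    constructor
    · ext a b'
      simp [Z, Matrix.conjTranspose_apply, Matrix.single, and_comm]
    · ext a b'
      simp only [Z, Matrix.mul_apply, Matrix.single, Matrix.of_apply, ite_and,
        ite_mul, mul_ite, one_mul, mul_one, zero_mul, mul_zero]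
      simp [Finset.sum_ite_eq', Finset.sum_ite_irrel]
      split_ifs <;> rfl
  · rw [← Equiv.sum_comp σ.symm Z]
    ext a b'
    simp [Z, Matrix.sum_apply, Matrix.single, Matrix.one_apply, ite_and,
      Finset.sum_ite_eq]
  · intro ρ _ _ i
    have hZU : ∀ (s : Fin n × Fin m) (q' : Fin n × Fin m),
        (((1 : Matrix (Fin n) (Fin n) ℂ) ⊗ₖ Z i) * U) s q'
          = if s.2 = σ i then U (s.1, σ i) q' else 0 := by
      intro s q'
      simp only [Matrix.mul_apply, Matrix.kroneckerMap_apply, Fintype.sum_prod_type,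
        Matrix.one_apply, Z, Matrix.single, Matrix.of_apply, ite_and,
        ite_mul, mul_ite, one_mul, mul_one, zero_mul, mul_zero]
      simp [Finset.sum_ite_irrel, Finset.sum_ite_eq, Finset.sum_ite_eq', eq_comm]
    have hM : ∀ q q' : Fin n × Fin m,
        (Uᴴ * ((1 : Matrix (Fin n) (Fin n) ℂ) ⊗ₖ Z i) * U) q q'
          = ∑ a : Fin n, (starRingEnd ℂ) (U (a, σ i) q) * U (a, σ i) q' := by
      intro q q'
      rw [Matrix.mul_assoc]
      simp only [Matrix.mul_apply, Matrix.conjTranspose_apply, hZU, Fintype.sum_prod_type,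
        mul_ite, mul_zero]
      simp [Finset.sum_ite_eq']
    have hMF : ∀ c c' : Fin n,
        (Uᴴ * ((1 : Matrix (Fin n) (Fin n) ℂ) ⊗ₖ Z i) * U) (c', k₀) (c, k₀) = F i c' c := by
      intro c c'
      rw [hM]
      have h1 : ∀ a : Fin n,
          (starRingEnd ℂ) (U (a, σ i) (c', k₀)) * U (a, σ i) (c, k₀)
            = (starRingEnd ℂ) (A i a c') * A i a c := by
        intro a; rw [hUentry, hUentry]
      rw [Finset.sum_congr rfl fun a _ => h1 a, ← hAF i]
      simp [Matrix.mul_apply, Matrix.conjTranspose_apply]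
    have hP : ∀ k k' : Fin m,
        Matrix.vecMulVec φ (star φ) k k' = if k = k₀ then if k' = k₀ then 1 else 0 else 0 := by
      intro k k'
      simp only [Matrix.vecMulVec_apply, Pi.star_apply, φ]
      split_ifs <;> simp
    have hRHS : ((ρ ⊗ₖ Matrix.vecMulVec φ (star φ)) *
        (Uᴴ * ((1 : Matrix (Fin n) (Fin n) ℂ) ⊗ₖ Z i) * U)).trace
        = ∑ c : Fin n, ∑ c' : Fin n,
            ρ c c' * (Uᴴ * ((1 : Matrix (Fin n) (Fin n) ℂ) ⊗ₖ Z i) * U) (c', k₀) (c, k₀) := by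
      rw [Matrix.trace]
      simp only [Matrix.diag_apply, Matrix.mul_apply, Matrix.kroneckerMap_apply, hP,
        Fintype.sum_prod_type, mul_ite, mul_zero, mul_one, ite_mul, zero_mul]
      simp only [Finset.sum_ite_irrel, Finset.sum_const_zero, Finset.sum_ite_eq',
        Finset.mem_univ, if_true]
    rw [hRHS, Finset.sum_congr rfl fun c _ => Finset.sum_congr rfl fun c' _ => by rw [hMF]]
    rw [Matrix.trace]
    simp [Matrix.mul_apply]
end

section
/- Let (E (i,j))_{(i,j) ∈ ι × κ} (ι, κ finite) be a POVM on ℂ^n, i.e. each E (i,j) is positive semidefinite and ∑_{i,j} E (i,j) = 1. Define the marginals E₁ i = ∑_j E (i,j) and E₂ j = ∑_i E (i,j). If every E₁ i is an orthogonal projection (E₁ i is Hermitian and (E₁ i)² = E₁ i), then for all (i,j): E (i,j) = (E₁ i)(E₂ j) = (E₂ j)(E₁ i). -/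
open Matrix
open scoped ComplexOrder

private lemma psd_neg_psd_eq_zero {n : ℕ} {M : Matrix (Fin n) (Fin n) ℂ}
    (h1 : M.PosSemidef) (h2 : (-M).PosSemidef) : M = 0 := by
  have hv : ∀ x, M *ᵥ x = 0 := by
    intro x
    refine (h1.dotProduct_mulVec_zero_iff x).mp ?_
    have hle : star x ⬝ᵥ M *ᵥ x ≤ 0 := by
      have := h2.dotProduct_mulVec_nonneg x
      rw [neg_mulVec, dotProduct_neg] at this
      exact neg_nonneg.mp this
    exact le_antisymm hle (h1.dotProduct_mulVec_nonneg x)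
  ext i j
  have := congrFun (hv (Pi.single j 1)) i
  simpa [mulVec_single] using this

private lemma absorb_of_le_proj {n : ℕ} {A P : Matrix (Fin n) (Fin n) ℂ}
    (hA : A.PosSemidef) (hP : P.IsHermitian) (hP2 : P * P = P)
    (hle : (P - A).PosSemidef) : A * P = A ∧ P * A = A := by
  have hQH : (1 - P)ᴴ = 1 - P := by simp [conjTranspose_sub, hP.eq]
  have hQP : (1 - P) * P = 0 := by rw [sub_mul, one_mul, hP2, sub_self]
  have hQAQpsd : ((1 - P) * A * (1 - P)).PosSemidef := by
    have := hA.conjTranspose_mul_mul_same (1 - P)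
    rwa [hQH] at this
  have hnegpsd : (-((1 - P) * A * (1 - P))).PosSemidef := by
    have h := hle.conjTranspose_mul_mul_same (1 - P)
    rw [hQH] at h
    have heq : (1 - P) * (P - A) * (1 - P) = -((1 - P) * A * (1 - P)) := by
      calc (1 - P) * (P - A) * (1 - P)
          = ((1 - P) * P) * (1 - P) - (1 - P) * A * (1 - P) := by noncomm_ring
        _ = -((1 - P) * A * (1 - P)) := by rw [hQP, zero_mul, zero_sub]
    rwa [heq] at h
  have hQAQ : (1 - P) * A * (1 - P) = 0 := psd_neg_psd_eq_zero hQAQpsd hnegpsd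
  obtain ⟨B, hBH, hBB⟩ : ∃ B : Matrix (Fin n) (Fin n) ℂ, Bᴴ = B ∧ B * B = A := by
    open MatrixOrder in
    exact ⟨CFC.sqrt A, (nonneg_iff_posSemidef.mp (CFC.sqrt_nonneg A)).1,
      CFC.sqrt_mul_sqrt_self A (nonneg_iff_posSemidef.mpr hA)⟩
  have hBQ : B * (1 - P) = 0 := by
    apply conjTranspose_mul_self_eq_zero.mp
    rw [conjTranspose_mul, hBH, hQH]
    calc (1 - P) * B * (B * (1 - P)) = (1 - P) * (B * B) * (1 - P) := by noncomm_ring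
      _ = (1 - P) * A * (1 - P) := by rw [hBB]
      _ = 0 := hQAQ
  have hAQ : A * (1 - P) = 0 := by
    calc A * (1 - P) = B * (B * (1 - P)) := by rw [← mul_assoc, hBB]
      _ = 0 := by rw [hBQ, mul_zero]
  have h1 : A * P = A := by
    have : A * (1 - P) = 0 := hAQ
    rw [mul_sub, mul_one, sub_eq_zero] at this
    exact this.symm
  refine ⟨h1, ?_⟩
  have := congrArg conjTranspose h1
  rwa [conjTranspose_mul, hP.eq, hA.1.eq] at this

/-- If one marginal of a (finite-outcome) biobservable on ℂ^n is projection valued,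
then the biobservable is the commuting product of its marginals. -/
theorem biobservable_projection_marginal_product {n : ℕ} {ι κ : Type}
    [Fintype ι] [Fintype κ]
    (E : ι × κ → Matrix (Fin n) (Fin n) ℂ)
    (hEpos : ∀ p, (E p).PosSemidef) (hEsum : ∑ p, E p = 1)
    (hproj : ∀ i, (∑ j, E (i, j)).IsHermitian ∧
      (∑ j, E (i, j)) * (∑ j, E (i, j)) = ∑ j, E (i, j)) :
    ∀ i j, E (i, j) = (∑ j', E (i, j')) * (∑ i', E (i', j)) ∧
      E (i, j) = (∑ i', E (i', j)) * (∑ j', E (i, j')) := by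
  classical
  intro i j
  set P : ι → Matrix (Fin n) (Fin n) ℂ := fun i => ∑ j, E (i, j) with hPdef
  have hPpsd : ∀ i, (P i).PosSemidef :=
    fun i => Finset.sum_induction _ _ (fun a b ha hb => ha.add hb)
      (Matrix.PosSemidef.zero) (fun j _ => hEpos (i, j))
  have hPsum : ∑ i, P i = 1 := by
    rw [← hEsum, ← Finset.sum_product']
    rfl
  -- orthogonality of the projections
  have horth : ∀ i i' : ι, i ≠ i' → P i * P i' = 0 := by
    intro a b hab
    have hPa : P a * P a = P a := (hproj a).2
    have hPb : P b * P b = P b := (hproj b).2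
    have hrest : (1 - P b - P a).PosSemidef := by
      have : ∑ c ∈ (Finset.univ.erase b).erase a, P c = 1 - P b - P a := by
        have hb : b ∈ Finset.univ := Finset.mem_univ b
        have ha : a ∈ Finset.univ.erase b := Finset.mem_erase.mpr ⟨hab, Finset.mem_univ a⟩
        rw [eq_sub_iff_add_eq, eq_sub_iff_add_eq]
        rw [Finset.sum_erase_add _ _ ha, Finset.sum_erase_add _ _ hb, hPsum]
      rw [← this]
      exact Finset.sum_induction _ _ (fun x y hx hy => hx.add hy)
        (Matrix.PosSemidef.zero) (fun c _ => hPpsd c)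
    -- conjugate by P a
    have hM : (P a * (1 - P b - P a) * P a).PosSemidef := by
      have := hrest.conjTranspose_mul_mul_same (P a)
      rwa [(hproj a).1.eq] at this
    have heq : P a * (1 - P b - P a) * P a = -(P a * P b * P a) := by
      have h3 : P a * P a * P a = P a := by rw [hPa, hPa]
      calc P a * (1 - P b - P a) * P a
          = P a * P a - P a * P b * P a - P a * P a * P a := by noncomm_ring
        _ = -(P a * P b * P a) := by rw [hPa, hPa]; abel
    have hMpsd : (P a * P b * P a).PosSemidef := by
      have := (hPpsd b).conjTranspose_mul_mul_same (P a)
      rwa [(hproj a).1.eq] at this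
    have hzero : P a * P b * P a = 0 := by
      apply psd_neg_psd_eq_zero hMpsd
      rw [← heq]; exact hM
    -- P a * P b * P a = (P b * P a)ᴴ * (P b * P a)
    have hba : P b * P a = 0 := by
      apply conjTranspose_mul_self_eq_zero.mp
      rw [conjTranspose_mul, (hproj a).1.eq, (hproj b).1.eq]
      calc P a * P b * (P b * P a) = P a * (P b * P b) * P a := by noncomm_ring
        _ = P a * P b * P a := by rw [hPb]
        _ = 0 := hzero
    have := congrArg conjTranspose hba
    rwa [conjTranspose_mul, (hproj a).1.eq, (hproj b).1.eq, conjTranspose_zero] at this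
  -- each E (i,j) is absorbed by P i
  have habs : ∀ (a : ι) (c : κ), E (a, c) * P a = E (a, c) ∧ P a * E (a, c) = E (a, c) := by
    intro a c
    refine absorb_of_le_proj (hEpos (a, c)) (hproj a).1 (hproj a).2 ?_
    have : P a - E (a, c) = ∑ c' ∈ Finset.univ.erase c, E (a, c') := by
      rw [eq_comm, eq_sub_iff_add_eq, Finset.sum_erase_add _ _ (Finset.mem_univ c)]
    rw [this]
    exact Finset.sum_induction _ _ (fun x y hx hy => hx.add hy)
      (Matrix.PosSemidef.zero) (fun c' _ => hEpos (a, c'))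
  constructor
  · rw [Finset.mul_sum]
    rw [Finset.sum_eq_single i]
    · exact ((habs i j).2).symm
    · intro b _ hb
      have h1 : P i * E (b, j) = P i * (P b * E (b, j)) := by rw [(habs b j).2]
      rw [show (∑ j', E (i, j')) = P i from rfl, h1, ← mul_assoc, horth i b (Ne.symm hb),
        zero_mul]
    · intro h; exact absurd (Finset.mem_univ i) h
  · rw [Finset.sum_mul]
    rw [Finset.sum_eq_single i]
    · exact ((habs i j).1).symm
    · intro b _ hb
      have h1 : E (b, j) * P i = E (b, j) * P b * P i := by rw [(habs b j).1]
      rw [show (∑ j', E (i, j')) = P i from rfl, h1, mul_assoc, horth b i hb, mul_zero]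
    · intro h; exact absurd (Finset.mem_univ i) h
end

section
/- Let (E i)_{i ∈ ι} (ι finite) be a POVM on ℂ^n and f : ι → ℝ. Then the matrix ∑_i f(i)² · E i − (∑_i f(i) · E i)² is positive semidefinite. -/
open Matrix
open scoped ComplexOrder

/-- Positivity of the variance form: for a POVM (E i) with real values f, the
second moment operator dominates the square of the first moment operator. -/
theorem povm_second_moment_dominates_first_squared {n : ℕ} {ι : Type} [Fintype ι]
    (E : ι → Matrix (Fin n) (Fin n) ℂ)
    (hEpos : ∀ i, (E i).PosSemidef) (hEsum : ∑ i, E i = 1) (f : ι → ℝ) :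
    ((∑ i, (((f i) ^ 2 : ℝ) : ℂ) • E i) - (∑ i, ((f i : ℝ) : ℂ) • E i) ^ 2).PosSemidef := by
  set A : Matrix (Fin n) (Fin n) ℂ := ∑ i, ((f i : ℝ) : ℂ) • E i with hA
  have hAherm : A.IsHermitian := by
    unfold A
    unfold Matrix.IsHermitian
    rw [conjTranspose_sum]
    refine Finset.sum_congr rfl fun i _ => ?_
    rw [conjTranspose_smul, (hEpos i).1]
    simp
  set C : ι → Matrix (Fin n) (Fin n) ℂ := fun i => ((f i : ℝ) : ℂ) • 1 - A with hC
  have hCherm : ∀ i, (C i)ᴴ = C i := by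
    intro i
    unfold C
    rw [conjTranspose_sub, conjTranspose_smul, conjTranspose_one, hAherm]
    simp
  have expand : ∀ i, C i * E i * C i =
      (((f i) ^ 2 : ℝ) : ℂ) • E i - (((f i : ℝ) : ℂ) • E i) * A
        - A * (((f i : ℝ) : ℂ) • E i) + A * E i * A := by
    intro i
    unfold C
    simp only [sub_mul, mul_sub, smul_mul_assoc, mul_smul_comm, one_mul, mul_one,
      smul_smul]
    push_cast
    module
  have key : ∑ i, C i * E i * C i = (∑ i, (((f i) ^ 2 : ℝ) : ℂ) • E i) - A ^ 2 := by
    calc ∑ i, C i * E i * C i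
        = ∑ i, ((((f i) ^ 2 : ℝ) : ℂ) • E i - (((f i : ℝ) : ℂ) • E i) * A
            - A * (((f i : ℝ) : ℂ) • E i) + A * E i * A) :=
          Finset.sum_congr rfl fun i _ => expand i
      _ = (∑ i, (((f i) ^ 2 : ℝ) : ℂ) • E i) - (∑ i, ((f i : ℝ) : ℂ) • E i) * A
            - A * (∑ i, ((f i : ℝ) : ℂ) • E i) + A * (∑ i, E i) * A := by
          simp only [Finset.sum_add_distrib, Finset.sum_sub_distrib,
            ← Finset.sum_mul, ← Finset.mul_sum]
      _ = (∑ i, (((f i) ^ 2 : ℝ) : ℂ) • E i) - A ^ 2 := by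
          rw [hEsum, ← hA]
          simp only [mul_one, pow_two]
          abel
  rw [← key]
  refine Finset.sum_induction _ _ (fun a b ha hb => ha.add hb) Matrix.PosSemidef.zero ?_
  intro i _
  have := (hEpos i).mul_mul_conjTranspose_same (C i)
  rwa [hCherm i] at this
end

section
/- Let A, B be Hermitian n×n complex matrices and let (G (i,j))_{(i,j) ∈ ι × κ} (ι, κ finite) be a POVM on ℂ^n with value maps x : ι → ℝ and y : κ → ℝ. Define the marginals C i = ∑_j G (i,j) and D j = ∑_i G (i,j), and assume the approximations are unbiased: ∑_i x(i) · C i = A and ∑_j y(j) · D j = B. Define the intrinsic noise operators V(C) = ∑_i x(i)² · C i − A² and V(D) = ∑_j y(j)² · D j − B². Then for every density matrix ρ on ℂ^n: Tr(ρ V(C)) · Tr(ρ V(D)) ≥ (1/4) |Tr(ρ (A B − B A))|². -/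
open Matrix
open scoped ComplexOrder InnerProductSpace ComplexConjugate

section Aux

variable {n : ℕ}

private lemma trace_ctm (X Y : Matrix (Fin n) (Fin n) ℂ) :
    (Xᴴ * Y).trace = ∑ ij : Fin n × Fin n, conj (X ij.1 ij.2) * Y ij.1 ij.2 := by
  rw [Fintype.sum_prod_type_right]
  simp only [Matrix.trace, Matrix.diag, Matrix.mul_apply, Matrix.conjTranspose_apply]
  rfl

private lemma expand_sum {α : Type} [Fintype α]
    (ρ : Matrix (Fin n) (Fin n) ℂ) (G : α → Matrix (Fin n) (Fin n) ℂ)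
    (f g : α → ℂ) (P Q F H : Matrix (Fin n) (Fin n) ℂ)
    (hf : ∑ p, f p • G p = F) (hg : ∑ p, g p • G p = H) (h1 : ∑ p, G p = 1) :
    ∑ p, ρ * (f p • 1 - P) * G p * (g p • 1 - Q)
      = (∑ p, (f p * g p) • (ρ * G p)) - ρ * F * Q - ρ * P * H + ρ * P * Q := by
  have e : ∀ p, ρ * (f p • 1 - P) * G p * (g p • 1 - Q)
      = (f p * g p) • (ρ * G p) - f p • (ρ * G p * Q)
        - g p • (ρ * P * G p) + ρ * P * G p * Q := by
    intro p
    have hc : g p * f p = f p * g p := mul_comm _ _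
    simp only [mul_sub, sub_mul, mul_smul_comm, smul_mul_assoc, mul_one, smul_sub,
      smul_smul, hc]
    abel
  have h2 : ∑ p, f p • (ρ * G p * Q) = ρ * F * Q := by
    rw [← hf, Finset.mul_sum, Finset.sum_mul]
    exact Finset.sum_congr rfl fun p _ => by rw [mul_smul_comm, smul_mul_assoc]
  have h3 : ∑ p, g p • (ρ * P * G p) = ρ * P * H := by
    rw [← hg, Finset.mul_sum]
    exact Finset.sum_congr rfl fun p _ => by rw [mul_smul_comm]
  have h4 : ∑ p, ρ * P * G p * Q = ρ * P * Q := by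
    have : ρ * P * (∑ p, G p) * Q = ∑ p, ρ * P * G p * Q := by
      rw [Finset.mul_sum, Finset.sum_mul]
    rw [← this, h1, mul_one]
  simp only [e, Finset.sum_add_distrib, Finset.sum_sub_distrib, h2, h3, h4]

private noncomputable def Phi {α : Type} [Fintype α]
    (S : α → Matrix (Fin n) (Fin n) ℂ) (R : Matrix (Fin n) (Fin n) ℂ)
    (F : α → Matrix (Fin n) (Fin n) ℂ) :
    EuclideanSpace ℂ (α × (Fin n × Fin n)) :=
  WithLp.toLp 2 (fun q => (S q.1 * F q.1 * R) q.2.1 q.2.2)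

private lemma inner_Phi {α : Type} [Fintype α]
    (S : α → Matrix (Fin n) (Fin n) ℂ) (R : Matrix (Fin n) (Fin n) ℂ)
    (hS : ∀ p, (S p).IsHermitian) (hR : R.IsHermitian)
    (F H : α → Matrix (Fin n) (Fin n) ℂ) :
    ⟪Phi S R F, Phi S R H⟫_ℂ
      = ∑ p, (R * R * (F p)ᴴ * (S p * S p) * H p).trace := by
  rw [PiLp.inner_apply]
  rw [Fintype.sum_prod_type]
  refine Finset.sum_congr rfl fun p _ => ?_
  have : ∑ ij : Fin n × Fin n,
      ⟪(Phi S R F) (p, ij), (Phi S R H) (p, ij)⟫_ℂ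
      = ((S p * F p * R)ᴴ * (S p * H p * R)).trace := by
    rw [trace_ctm]
    simp [Phi, RCLike.inner_apply, mul_comm]
  rw [this]
  rw [Matrix.conjTranspose_mul, Matrix.conjTranspose_mul, hR.eq, (hS p).eq]
  rw [show (R * ((F p)ᴴ * S p)) * (S p * H p * R)
      = (R * (F p)ᴴ * (S p * S p) * H p) * R by noncomm_ring]
  rw [Matrix.trace_mul_comm]
  noncomm_ring

end Aux

/-- Intrinsic-noise trade-off for unbiased joint approximations: if a POVM G on
ι × κ has marginals C, D whose first moment operators equal the Hermitian targets
A, B, then the expectations of the intrinsic noise operators obey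
Tr(ρV(C))·Tr(ρV(D)) ≥ (1/4)|Tr(ρ[A,B])|². -/
theorem unbiased_joint_intrinsic_noise_tradeoff {n : ℕ} {ι κ : Type}
    [Fintype ι] [Fintype κ]
    (A B : Matrix (Fin n) (Fin n) ℂ) (hA : A.IsHermitian) (hB : B.IsHermitian)
    (G : ι × κ → Matrix (Fin n) (Fin n) ℂ)
    (hGpos : ∀ p, (G p).PosSemidef) (hGsum : ∑ p, G p = 1)
    (x : ι → ℝ) (y : κ → ℝ)
    (hxC : ∑ i, ((x i : ℝ) : ℂ) • (∑ j, G (i, j)) = A)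
    (hyD : ∑ j, ((y j : ℝ) : ℂ) • (∑ i, G (i, j)) = B)
    (ρ : Matrix (Fin n) (Fin n) ℂ) (hρ : ρ.PosSemidef) (hρtr : ρ.trace = 1) :
    (1 / 4) * ‖(ρ * (A * B - B * A)).trace‖ ^ 2 ≤
      (ρ * ((∑ i, (((x i) ^ 2 : ℝ) : ℂ) • (∑ j, G (i, j))) - A ^ 2)).trace.re *
      (ρ * ((∑ j, (((y j) ^ 2 : ℝ) : ℂ) • (∑ i, G (i, j))) - B ^ 2)).trace.re := by
  classical
  -- square roots
  set sG : ι × κ → Matrix (Fin n) (Fin n) ℂ := fun p => open scoped MatrixOrder in CFC.sqrt (G p) with hsG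
  set sρ : Matrix (Fin n) (Fin n) ℂ := open scoped MatrixOrder in CFC.sqrt ρ with hsρ
  have hsGsq : ∀ p, sG p * sG p = G p := fun p => by open scoped MatrixOrder in exact CFC.sqrt_mul_sqrt_self (G p) (hGpos p).nonneg
  have hsρsq : sρ * sρ = ρ := by open scoped MatrixOrder in exact CFC.sqrt_mul_sqrt_self ρ hρ.nonneg
  have hsGH : ∀ p, (sG p).IsHermitian := fun p => by open scoped MatrixOrder in exact (CFC.sqrt_nonneg (G p)).posSemidef.1
  have hsρH : sρ.IsHermitian := by open scoped MatrixOrder in exact (CFC.sqrt_nonneg ρ).posSemidef.1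
  -- families
  set u : ι × κ → Matrix (Fin n) (Fin n) ℂ := fun p => ((x p.1 : ℂ)) • 1 - A with hu
  set v : ι × κ → Matrix (Fin n) (Fin n) ℂ := fun p => ((y p.2 : ℂ)) • 1 - B with hv
  have huH : ∀ p, (u p)ᴴ = u p := by
    intro p
    simp [hu, Matrix.conjTranspose_smul, hA.eq, Complex.conj_ofReal]
  have hvH : ∀ p, (v p)ᴴ = v p := by
    intro p
    simp [hv, Matrix.conjTranspose_smul, hB.eq, Complex.conj_ofReal]
  -- flattened unbiasedness
  have hx' : ∑ p : ι × κ, ((x p.1 : ℂ)) • G p = A := by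
    rw [← hxC, Fintype.sum_prod_type]
    simp [Finset.smul_sum]
  have hy' : ∑ p : ι × κ, ((y p.2 : ℂ)) • G p = B := by
    rw [← hyD, Fintype.sum_prod_type_right]
    simp [Finset.smul_sum]
  -- second moments
  have hS2x : ∑ p : ι × κ, ((x p.1 : ℂ) * (x p.1 : ℂ)) • (ρ * G p)
      = ρ * (∑ i, (((x i) ^ 2 : ℝ) : ℂ) • (∑ j, G (i, j))) := by
    rw [Finset.mul_sum, Fintype.sum_prod_type]
    refine Finset.sum_congr rfl fun i _ => ?_
    have : (((x i) ^ 2 : ℝ) : ℂ) = (x i : ℂ) * (x i : ℂ) := by push_cast; ring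
    simp [this, Finset.smul_sum, Finset.mul_sum, mul_smul_comm]
  have hS2y : ∑ p : ι × κ, ((y p.2 : ℂ) * (y p.2 : ℂ)) • (ρ * G p)
      = ρ * (∑ j, (((y j) ^ 2 : ℝ) : ℂ) • (∑ i, G (i, j))) := by
    rw [Finset.mul_sum, Fintype.sum_prod_type_right]
    refine Finset.sum_congr rfl fun j _ => ?_
    have : (((y j) ^ 2 : ℝ) : ℂ) = (y j : ℂ) * (y j : ℂ) := by push_cast; ring
    simp [this, Finset.smul_sum, Finset.mul_sum, mul_smul_comm]
  -- matrix identities from expand_sum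
  have E1 : ∑ p, ρ * u p * G p * u p
      = ρ * ((∑ i, (((x i) ^ 2 : ℝ) : ℂ) • (∑ j, G (i, j))) - A ^ 2) := by
    rw [expand_sum ρ G _ _ A A A A hx' hx' hGsum, hS2x]
    rw [mul_sub]
    noncomm_ring
  have E2 : ∑ p, ρ * v p * G p * v p
      = ρ * ((∑ j, (((y j) ^ 2 : ℝ) : ℂ) • (∑ i, G (i, j))) - B ^ 2) := by
    rw [expand_sum ρ G _ _ B B B B hy' hy' hGsum, hS2y]
    rw [mul_sub]
    noncomm_ring
  have E3 : (∑ p, ρ * u p * G p * v p) - (∑ p, ρ * v p * G p * u p)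
      = -(ρ * (A * B - B * A)) := by
    rw [expand_sum ρ G _ _ A B A B hx' hy' hGsum,
        expand_sum ρ G _ _ B A B A hy' hx' hGsum]
    have hcomm : ∀ p : ι × κ, (y p.2 : ℂ) * (x p.1 : ℂ) = (x p.1 : ℂ) * (y p.2 : ℂ) :=
      fun p => mul_comm _ _
    simp only [hcomm, mul_sub, ← mul_assoc]
    abel
  -- inner products
  set Pu := Phi sG sρ u with hPu
  set Pv := Phi sG sρ v with hPv
  have izuv : ⟪Pu, Pv⟫_ℂ = ∑ p, (ρ * u p * G p * v p).trace := by
    rw [hPu, hPv, inner_Phi sG sρ hsGH hsρH u v]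
    refine Finset.sum_congr rfl fun p _ => ?_
    rw [hsρsq, hsGsq, huH]
  have izvu : ⟪Pv, Pu⟫_ℂ = ∑ p, (ρ * v p * G p * u p).trace := by
    rw [hPu, hPv, inner_Phi sG sρ hsGH hsρH v u]
    refine Finset.sum_congr rfl fun p _ => ?_
    rw [hsρsq, hsGsq, hvH]
  have izuu : ⟪Pu, Pu⟫_ℂ
      = (ρ * ((∑ i, (((x i) ^ 2 : ℝ) : ℂ) • (∑ j, G (i, j))) - A ^ 2)).trace := by
    rw [hPu, inner_Phi sG sρ hsGH hsρH u u, ← E1, ← Matrix.trace_sum]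
    refine congrArg _ (Finset.sum_congr rfl fun p _ => ?_)
    rw [hsρsq, hsGsq, huH]
  have izvv : ⟪Pv, Pv⟫_ℂ
      = (ρ * ((∑ j, (((y j) ^ 2 : ℝ) : ℂ) • (∑ i, G (i, j))) - B ^ 2)).trace := by
    rw [hPv, inner_Phi sG sρ hsGH hsρH v v, ← E2, ← Matrix.trace_sum]
    refine congrArg _ (Finset.sum_congr rfl fun p _ => ?_)
    rw [hsρsq, hsGsq, hvH]
  set z : ℂ := ⟪Pu, Pv⟫_ℂ with hz
  have hzc : ⟪Pv, Pu⟫_ℂ = conj z := (inner_conj_symm Pv Pu).symm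
  -- commutator identity
  have hst : z - conj z = -(ρ * (A * B - B * A)).trace := by
    rw [← hzc, izvu, izuv, ← Matrix.trace_sum, ← Matrix.trace_sum, ← Matrix.trace_sub, E3,
      Matrix.trace_neg]
  have hcommutator : (ρ * (A * B - B * A)).trace = conj z - z := by
    linear_combination hst
  -- |Tr| = 2 |Im z|
  have habs : ‖(ρ * (A * B - B * A)).trace‖ ^ 2 = 4 * z.im ^ 2 := by
    rw [hcommutator]
    rw [Complex.sq_norm, Complex.normSq_apply]
    simp only [Complex.sub_re, Complex.sub_im, Complex.conj_re, Complex.conj_im]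
    ring
  -- Cauchy-Schwarz
  have e1 : ((⟪Pu, Pu⟫_ℂ) : ℂ).re = ‖Pu‖ ^ 2 := by
    have := inner_self_eq_norm_sq (𝕜 := ℂ) Pu
    simpa using this
  have e2 : ((⟪Pv, Pv⟫_ℂ) : ℂ).re = ‖Pv‖ ^ 2 := by
    have := inner_self_eq_norm_sq (𝕜 := ℂ) Pv
    simpa using this
  have hcs : ‖z‖ ^ 2 ≤ ((⟪Pu, Pu⟫_ℂ) : ℂ).re * ((⟪Pv, Pv⟫_ℂ) : ℂ).re := by
    have h1 : ‖z‖ ≤ ‖Pu‖ * ‖Pv‖ := norm_inner_le_norm Pu Pv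
    have h2 : ‖z‖ ^ 2 ≤ (‖Pu‖ * ‖Pv‖) ^ 2 :=
      pow_le_pow_left₀ (norm_nonneg _) h1 2
    rw [mul_pow] at h2
    rw [e1, e2]
    exact h2
  have him : z.im ^ 2 ≤ ‖z‖ ^ 2 := by
    rw [← sq_abs z.im]
    exact pow_le_pow_left₀ (abs_nonneg _) (Complex.abs_im_le_norm z) 2
  rw [← izuu, ← izvv]
  rw [habs]
  nlinarith [hcs, him]
end

section
/- Let A, B be Hermitian n×n complex matrices and let (G (i,j))_{(i,j) ∈ ι × κ} (ι, κ finite) be a POVM on ℂ^n with value maps x : ι → ℝ and y : κ → ℝ. Define the marginals C i = ∑_j G (i,j) and D j = ∑_i G (i,j), and assume unbiasedness: ∑_i x(i) · C i = A and ∑_j y(j) · D j = B. For a density matrix ρ let Δ(C_ρ)² = ∑_i x(i)² Tr(ρ C i) − (∑_i x(i) Tr(ρ C i))² and Δ(D_ρ)² = ∑_j y(j)² Tr(ρ D j) − (∑_j y(j) Tr(ρ D j))² be the variances of the outcome distributions. Then Δ(C_ρ) · Δ(D_ρ) ≥ |Tr(ρ (A B − B A))|. -/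
open Matrix
open scoped ComplexOrder

lemma psd_trace_nonneg' {m : Type*} [Fintype m] [DecidableEq m] {X : Matrix m m ℂ}
    (hX : X.PosSemidef) : 0 ≤ X.trace := by
  rw [Matrix.trace]
  refine Finset.sum_nonneg fun i _ => ?_
  exact hX.diag_nonneg

open scoped MatrixOrder in
lemma trace_mul_psd_nonneg' {m : Type*} [Fintype m] [DecidableEq m] {X Y : Matrix m m ℂ}
    (hX : X.PosSemidef) (hY : Y.PosSemidef) : 0 ≤ ((X * Y).trace).re := by
  have h1 : X * Y = X * CFC.sqrt Y * CFC.sqrt Y := by rw [Matrix.mul_assoc, CFC.sqrt_mul_sqrt_self Y hY.nonneg]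
  have h2 := hX.conjTranspose_mul_mul_same (CFC.sqrt Y)
  rw [(CFC.sqrt_nonneg Y).posSemidef.1.eq] at h2
  have h3 : 0 ≤ (CFC.sqrt Y * X * CFC.sqrt Y).trace := psd_trace_nonneg' h2
  have h4 : (X * Y).trace = (CFC.sqrt Y * X * CFC.sqrt Y).trace := by
    rw [h1, Matrix.trace_mul_cycle, Matrix.mul_assoc]
  rw [h4]
  exact (Complex.le_def.mp h3).1

lemma psd_sum' {m α : Type*} [Fintype m] [Fintype α] [DecidableEq m] (f : α → Matrix m m ℂ)
    (hf : ∀ a, (f a).PosSemidef) : (∑ a, f a).PosSemidef := by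
  classical
  exact Finset.sum_induction f _ (fun a b ha hb => ha.add hb) Matrix.PosSemidef.zero
    (fun a _ => hf a)

lemma quad_aux (p q t : ℝ) (hq : 0 ≤ q) (h : ∀ l : ℝ, 0 ≤ p + l^2*q + l*t) : t^2 ≤ 4*(p*q) := by
  rcases eq_or_lt_of_le hq with hq0 | hq0
  · have ht : t = 0 := by
      by_contra ht
      have h1 := h (-(p+1)/t)
      rw [← hq0] at h1
      have h2 : (-(p+1)/t) * t = -(p+1) := div_mul_cancel₀ _ ht
      nlinarith [h 0]
    have hp := h 0
    nlinarith
  · have h1 := h (-(t/(2*q)))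
    have h3 : (-(t/(2*q)))^2 * q = t^2/(4*q) := by field_simp; ring
    have h4 : (-(t/(2*q))) * t = -(t^2/(2*q)) := by field_simp
    rw [h3, h4] at h1
    have hhalf : t^2/(2*q) = 2*(t^2/(4*q)) := by field_simp; ring
    have h5 : t^2/(4*q) ≤ p := by rw [hhalf] at h1; linarith
    calc t^2 = (t^2/(4*q)) * (4*q) := by field_simp
    _ ≤ p * (4*q) := by nlinarith
    _ = 4*(p*q) := by ring

lemma combine_aux {pA qA pB qB t : ℝ} (hpA : 0 ≤ pA) (hqA : 0 ≤ qA) (hpB : 0 ≤ pB)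
    (hqB : 0 ≤ qB) (h1 : t^2 ≤ 4*(pA*pB)) (h2 : t^2 ≤ 4*(qA*qB)) :
    |t| ≤ Real.sqrt (qA + pA) * Real.sqrt (qB + pB) := by
  set u := Real.sqrt (pA*pB) with hu
  set v := Real.sqrt (qA*qB) with hv
  have hu2 : u^2 = pA*pB := Real.sq_sqrt (mul_nonneg hpA hpB)
  have hv2 : v^2 = qA*qB := Real.sq_sqrt (mul_nonneg hqA hqB)
  have hun : 0 ≤ u := Real.sqrt_nonneg _
  have hvn : 0 ≤ v := Real.sqrt_nonneg _
  have htu : |t| ≤ 2*u := by nlinarith [sq_abs t, abs_nonneg t]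
  have htv : |t| ≤ 2*v := by nlinarith [sq_abs t, abs_nonneg t]
  have huv : u * v = Real.sqrt (pA*qB) * Real.sqrt (pB*qA) := by
    rw [hu, hv, ← Real.sqrt_mul (mul_nonneg hpA hpB), ← Real.sqrt_mul (mul_nonneg hpA hqB)]
    ring_nf
  have hcross : 2*(u*v) ≤ pA*qB + pB*qA := by
    rw [huv]
    nlinarith [sq_nonneg (Real.sqrt (pA*qB) - Real.sqrt (pB*qA)),
      Real.sq_sqrt (mul_nonneg hpA hqB), Real.sq_sqrt (mul_nonneg hpB hqA)]
  have key : (u+v)^2 ≤ (qA+pA)*(qB+pB) := by nlinarith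
  have habs : |t| ≤ u + v := by linarith
  calc |t| ≤ u + v := habs
  _ ≤ Real.sqrt ((qA+pA)*(qB+pB)) := by
      rw [show u + v = Real.sqrt ((u+v)^2) from (Real.sqrt_sq (by linarith)).symm]
      exact Real.sqrt_le_sqrt key
  _ = _ := Real.sqrt_mul (by linarith) _

/-- `(cx•1 - P) * G * (cy•1 - Q)` expansion. -/
lemma cross_expand {m : Type*} [Fintype m] [DecidableEq m]
    (P Q G : Matrix m m ℂ) (cx cy : ℂ) :
    (cx • (1 : Matrix m m ℂ) - P) * G * (cy • (1 : Matrix m m ℂ) - Q)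
      = (cx * cy) • G - cx • (G * Q) - cy • (P * G) + P * G * Q := by
  simp only [Matrix.sub_mul, Matrix.mul_sub, Matrix.smul_mul, Matrix.mul_smul,
    Matrix.one_mul, Matrix.mul_one, smul_smul]
  module

lemma sandwich_expand {m : Type*} [Fintype m] [DecidableEq m]
    (X Y G : Matrix m m ℂ) (u : ℂ) :
    (X - u • Y) * G * (X + u • Y) =
      X * G * X + u • (X * G * Y) - u • (Y * G * X) - (u * u) • (Y * G * Y) := by
  simp only [Matrix.sub_mul, Matrix.mul_add, Matrix.add_mul, Matrix.mul_sub,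
    Matrix.smul_mul, Matrix.mul_smul, smul_smul]
  module


/-- Standard-deviation trade-off for unbiased joint approximations: the product of
the standard deviations of the marginal outcome distributions is bounded below by
the full commutator expectation |Tr(ρ[A,B])|. -/
theorem unbiased_joint_standard_deviation_tradeoff {n : ℕ} {ι κ : Type}
    [Fintype ι] [Fintype κ]
    (A B : Matrix (Fin n) (Fin n) ℂ) (hA : A.IsHermitian) (hB : B.IsHermitian)
    (G : ι × κ → Matrix (Fin n) (Fin n) ℂ)
    (hGpos : ∀ p, (G p).PosSemidef) (hGsum : ∑ p, G p = 1)
    (x : ι → ℝ) (y : κ → ℝ)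
    (hxC : ∑ i, ((x i : ℝ) : ℂ) • (∑ j, G (i, j)) = A)
    (hyD : ∑ j, ((y j : ℝ) : ℂ) • (∑ i, G (i, j)) = B)
    (ρ : Matrix (Fin n) (Fin n) ℂ) (hρ : ρ.PosSemidef) (hρtr : ρ.trace = 1) :
    ‖(ρ * (A * B - B * A)).trace‖ ≤
      Real.sqrt ((∑ i, (x i) ^ 2 * (ρ * (∑ j, G (i, j))).trace.re) -
          (∑ i, (x i) * (ρ * (∑ j, G (i, j))).trace.re) ^ 2) *
      Real.sqrt ((∑ j, (y j) ^ 2 * (ρ * (∑ i, G (i, j))).trace.re) -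
          (∑ j, (y j) * (ρ * (∑ i, G (i, j))).trace.re) ^ 2) := by
  classical
  -- the linear functional X ↦ Tr(ρ X)
  set φ : Matrix (Fin n) (Fin n) ℂ →ₗ[ℂ] ℂ :=
    { toFun := fun X => (ρ * X).trace
      map_add' := fun X Y => by
        show (ρ * (X + Y)).trace = (ρ * X).trace + (ρ * Y).trace
        rw [Matrix.mul_add, Matrix.trace_add]
      map_smul' := fun c X => by
        show (ρ * (c • X)).trace = c • (ρ * X).trace
        rw [Matrix.mul_smul, Matrix.trace_smul] } with hφdef
  have hφ : ∀ X : Matrix (Fin n) (Fin n) ℂ, φ X = (ρ * X).trace := fun X => rfl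
  -- marginal sums
  have hSA : ∑ p : ι × κ, ((x p.1 : ℂ)) • G p = A := by
    rw [← hxC]
    simp only [Fintype.sum_prod_type]
    exact Finset.sum_congr rfl fun i _ => (Finset.smul_sum).symm
  have hSB : ∑ p : ι × κ, ((y p.2 : ℂ)) • G p = B := by
    rw [← hyD]
    simp only [Fintype.sum_prod_type]
    rw [Finset.sum_comm]
    exact Finset.sum_congr rfl fun j _ => (Finset.smul_sum).symm
  -- the deviation matrices
  set X : ι × κ → Matrix (Fin n) (Fin n) ℂ := fun p => ((x p.1 : ℂ)) • 1 - A with hXdef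
  set Y : ι × κ → Matrix (Fin n) (Fin n) ℂ := fun p => ((y p.2 : ℂ)) • 1 - B with hYdef
  have hXherm : ∀ p, (X p)ᴴ = X p := by
    intro p
    rw [hXdef]
    rw [Matrix.conjTranspose_sub, Matrix.conjTranspose_smul, Matrix.conjTranspose_one,
      hA.eq, Complex.star_def, Complex.conj_ofReal]
  have hYherm : ∀ p, (Y p)ᴴ = Y p := by
    intro p
    rw [hYdef]
    rw [Matrix.conjTranspose_sub, Matrix.conjTranspose_smul, Matrix.conjTranspose_one,
      hB.eq, Complex.star_def, Complex.conj_ofReal]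
  -- generic cross sum computation
  have key : ∀ (P Q : Matrix (Fin n) (Fin n) ℂ) (cP cQ : ι × κ → ℂ),
      (∑ p, cP p • G p = P) → (∑ p, cQ p • G p = Q) →
      ∑ p, (cP p • 1 - P) * G p * (cQ p • 1 - Q)
        = (∑ p, (cP p * cQ p) • G p) - P * Q := by
    intro P Q cP cQ hP hQ
    have hterm : ∀ p : ι × κ, (cP p • (1 : Matrix (Fin n) (Fin n) ℂ) - P) * G p * (cQ p • 1 - Q)
        = (cP p * cQ p) • G p - (cP p • G p) * Q - P * (cQ p • G p) + P * (G p * Q) := by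
      intro p
      rw [cross_expand, Matrix.smul_mul, Matrix.mul_smul, Matrix.mul_assoc]
    rw [Finset.sum_congr rfl fun p _ => hterm p]
    simp only [Finset.sum_add_distrib, Finset.sum_sub_distrib, ← Finset.sum_mul,
      ← Finset.mul_sum, hP, hQ, hGsum, Matrix.one_mul, Matrix.mul_one]
    abel
  set EA : Matrix (Fin n) (Fin n) ℂ := ∑ p, X p * G p * X p with hEAdef
  set EB : Matrix (Fin n) (Fin n) ℂ := ∑ p, Y p * G p * Y p with hEBdef
  set K : Matrix (Fin n) (Fin n) ℂ := ∑ p, X p * G p * Y p with hKdef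
  set K' : Matrix (Fin n) (Fin n) ℂ := ∑ p, Y p * G p * X p with hK'def
  set MXY : Matrix (Fin n) (Fin n) ℂ := ∑ p : ι × κ, ((x p.1 : ℂ) * (y p.2 : ℂ)) • G p with hMXYdef
  set M2X : Matrix (Fin n) (Fin n) ℂ := ∑ p : ι × κ, ((x p.1 : ℂ) * (x p.1 : ℂ)) • G p with hM2Xdef
  set M2Y : Matrix (Fin n) (Fin n) ℂ := ∑ p : ι × κ, ((y p.2 : ℂ) * (y p.2 : ℂ)) • G p with hM2Ydef
  have hEA : EA = M2X - A * A := key A A _ _ hSA hSA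
  have hEB : EB = M2Y - B * B := key B B _ _ hSB hSB
  have hK : K = MXY - A * B := key A B _ _ hSA hSB
  have hK' : K' = MXY - B * A := by
    rw [hK'def, key B A _ _ hSB hSA, hMXYdef]
    congr 1
    exact Finset.sum_congr rfl fun p _ => by rw [mul_comm]
  -- PSD facts
  have hEApsd : EA.PosSemidef := by
    rw [hEAdef]
    refine psd_sum' _ fun p => ?_
    have h := (hGpos p).conjTranspose_mul_mul_same (X p)
    rwa [hXherm p] at h
  have hEBpsd : EB.PosSemidef := by
    rw [hEBdef]
    refine psd_sum' _ fun p => ?_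
    have h := (hGpos p).conjTranspose_mul_mul_same (Y p)
    rwa [hYherm p] at h
  -- the commutator expectation
  set c : ℂ := (ρ * (A * B - B * A)).trace with hcdef
  set t : ℝ := c.im with htdef
  have hcre : c.re = 0 := by
    have h1 : (ρ * (A * B - B * A))ᴴ = (B * A - A * B) * ρ := by
      rw [Matrix.conjTranspose_mul, Matrix.conjTranspose_sub, Matrix.conjTranspose_mul,
        Matrix.conjTranspose_mul, hA.eq, hB.eq, hρ.1.eq]
    have h2 : star c = -c := by
      rw [hcdef, ← Matrix.trace_conjTranspose, h1, Matrix.trace_mul_comm,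
        show B * A - A * B = -(A * B - B * A) from (neg_sub _ _).symm,
        Matrix.mul_neg, Matrix.trace_neg]
    have h3 := congrArg Complex.re h2
    simp only [Complex.star_def, Complex.conj_re, Complex.neg_re] at h3
    linarith
  have habs : ‖c‖ = |t| := by
    rw [Complex.norm_def, Complex.normSq_apply, hcre, htdef]
    simp [Real.sqrt_mul_self_eq_abs]
  have hcφ : c = φ (A * B) - φ (B * A) := by
    rw [hcdef, ← map_sub, hφ, Matrix.mul_sub]
  -- expectations of A and B are real
  have hTa : (ρ * A).trace = (((ρ * A).trace.re : ℝ) : ℂ) := by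
    have h1 : (ρ * A)ᴴ = A * ρ := by rw [Matrix.conjTranspose_mul, hA.eq, hρ.1.eq]
    have h2 : star ((ρ * A).trace) = (ρ * A).trace := by
      rw [← Matrix.trace_conjTranspose, h1, Matrix.trace_mul_comm]
    exact (Complex.conj_eq_iff_re.mp h2).symm
  have hTb : (ρ * B).trace = (((ρ * B).trace.re : ℝ) : ℂ) := by
    have h1 : (ρ * B)ᴴ = B * ρ := by rw [Matrix.conjTranspose_mul, hB.eq, hρ.1.eq]
    have h2 : star ((ρ * B).trace) = (ρ * B).trace := by
      rw [← Matrix.trace_conjTranspose, h1, Matrix.trace_mul_comm]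
    exact (Complex.conj_eq_iff_re.mp h2).symm
  set a : ℝ := (ρ * A).trace.re with hadef
  set b : ℝ := (ρ * B).trace.re with hbdef
  set A' : Matrix (Fin n) (Fin n) ℂ := (a : ℂ) • 1 - A with hA'def
  set B' : Matrix (Fin n) (Fin n) ℂ := (b : ℂ) • 1 - B with hB'def
  have hA'herm : A'ᴴ = A' := by
    rw [hA'def, Matrix.conjTranspose_sub, Matrix.conjTranspose_smul, Matrix.conjTranspose_one,
      hA.eq, Complex.star_def, Complex.conj_ofReal]
  have hB'herm : B'ᴴ = B' := by
    rw [hB'def, Matrix.conjTranspose_sub, Matrix.conjTranspose_smul, Matrix.conjTranspose_one,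
      hB.eq, Complex.star_def, Complex.conj_ofReal]
  have hφ1 : φ 1 = 1 := by rw [hφ, Matrix.mul_one, hρtr]
  have hφA : φ A = (a : ℂ) := by rw [hφ]; exact hTa
  have hφB : φ B = (b : ℂ) := by rw [hφ]; exact hTb
  -- scalar quantities
  set qA : ℝ := (φ EA).re with hqAdef
  set qB : ℝ := (φ EB).re with hqBdef
  set pA : ℝ := (φ (A' * A')).re with hpAdef
  set pB : ℝ := (φ (B' * B')).re with hpBdef
  have hqA0 : 0 ≤ qA := by rw [hqAdef, hφ]; exact trace_mul_psd_nonneg' hρ hEApsd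
  have hqB0 : 0 ≤ qB := by rw [hqBdef, hφ]; exact trace_mul_psd_nonneg' hρ hEBpsd
  have hpA0 : 0 ≤ pA := by
    rw [hpAdef, hφ]
    have h := Matrix.posSemidef_conjTranspose_mul_self A'
    rw [hA'herm] at h
    exact trace_mul_psd_nonneg' hρ h
  have hpB0 : 0 ≤ pB := by
    rw [hpBdef, hφ]
    have h := Matrix.posSemidef_conjTranspose_mul_self B'
    rw [hB'herm] at h
    exact trace_mul_psd_nonneg' hρ h
  -- measurement-noise quadratic inequality
  have hq_ineq : ∀ l : ℝ, 0 ≤ qA + l ^ 2 * qB + l * t := by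
    intro l
    set u : ℂ := Complex.I * (l : ℂ) with hudef
    have hustar : star u = -u := by
      rw [hudef]
      simp [Complex.star_def, _root_.map_mul, Complex.conj_I, Complex.conj_ofReal]
    have huu : u * u = -((l : ℂ) ^ 2) := by
      rw [hudef, mul_mul_mul_comm, Complex.I_mul_I]; ring
    have hconjZ : ∀ p, (X p + u • Y p)ᴴ = X p - u • Y p := by
      intro p
      rw [Matrix.conjTranspose_add, Matrix.conjTranspose_smul, hXherm, hYherm, hustar,
        neg_smul, ← sub_eq_add_neg]
    have hpsd : (∑ p, (X p + u • Y p)ᴴ * G p * (X p + u • Y p)).PosSemidef :=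
      psd_sum' _ fun p => (hGpos p).conjTranspose_mul_mul_same _
    have hexp : (∑ p, (X p + u • Y p)ᴴ * G p * (X p + u • Y p))
        = EA + ((l : ℂ) ^ 2) • EB + u • K - u • K' := by
      have hterm : ∀ p, (X p + u • Y p)ᴴ * G p * (X p + u • Y p)
          = X p * G p * X p + u • (X p * G p * Y p) - u • (Y p * G p * X p)
            + ((l : ℂ) ^ 2) • (Y p * G p * Y p) := by
        intro p
        rw [hconjZ p, sandwich_expand, huu]
        module
      rw [Finset.sum_congr rfl fun p _ => hterm p]
      simp only [Finset.sum_add_distrib, Finset.sum_sub_distrib, ← Finset.smul_sum]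
      rw [hEAdef, hEBdef, hKdef, hK'def]
      abel
    have h0 : 0 ≤ (φ (EA + ((l : ℂ) ^ 2) • EB + u • K - u • K')).re := by
      rw [← hexp, hφ]
      exact trace_mul_psd_nonneg' hρ hpsd
    have h2 : φ K - φ K' = -c := by
      rw [hK, hK', map_sub, map_sub, hcφ]
      ring
    have h1 : φ (EA + ((l : ℂ) ^ 2) • EB + u • K - u • K')
        = φ EA + ((l : ℂ) ^ 2) * φ EB + u * (-c) := by
      rw [map_sub, map_add, map_add, _root_.map_smul, _root_.map_smul, _root_.map_smul, ← h2]
      simp only [smul_eq_mul]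
      ring
    rw [h1] at h0
    have h3 : (φ EA + ((l : ℂ) ^ 2) * φ EB + u * (-c)).re = qA + l ^ 2 * qB + l * t := by
      rw [hudef, htdef, hqAdef, hqBdef]
      simp [Complex.add_re, Complex.mul_re, Complex.mul_im, Complex.ofReal_re,
        Complex.ofReal_im, Complex.I_re, Complex.I_im, Complex.neg_re, Complex.neg_im,
        hcre, pow_two]
      try ring
    rw [h3] at h0
    exact h0
  have hq_quad : t ^ 2 ≤ 4 * (qA * qB) := quad_aux _ _ _ hqB0 hq_ineq
  -- Robertson quadratic inequality
  have hcomm' : A' * B' - B' * A' = A * B - B * A := by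
    rw [hA'def, hB'def]
    simp only [Matrix.sub_mul, Matrix.mul_sub, Matrix.smul_mul, Matrix.mul_smul,
      Matrix.one_mul, Matrix.mul_one, smul_smul]
    module
  have hcomm : φ (A' * B') - φ (B' * A') = c := by
    rw [← map_sub, hcomm', map_sub]
    exact hcφ.symm
  have hp_ineq : ∀ l : ℝ, 0 ≤ pA + l ^ 2 * pB + l * (-t) := by
    intro l
    set u : ℂ := Complex.I * (l : ℂ) with hudef
    have hustar : star u = -u := by
      rw [hudef]
      simp [Complex.star_def, _root_.map_mul, Complex.conj_I, Complex.conj_ofReal]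
    have huu : u * u = -((l : ℂ) ^ 2) := by
      rw [hudef, mul_mul_mul_comm, Complex.I_mul_I]; ring
    have hconjW : (A' + u • B')ᴴ = A' - u • B' := by
      rw [Matrix.conjTranspose_add, Matrix.conjTranspose_smul, hA'herm, hB'herm, hustar,
        neg_smul, ← sub_eq_add_neg]
    have hpsd := Matrix.posSemidef_conjTranspose_mul_self (A' + u • B')
    have hexp : (A' + u • B')ᴴ * (A' + u • B')
        = A' * A' + ((l : ℂ) ^ 2) • (B' * B') + u • (A' * B') - u • (B' * A') := by
      rw [hconjW]
      have h := sandwich_expand A' B' 1 u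
      rw [Matrix.mul_one] at h
      rw [h, huu]
      simp only [Matrix.mul_one]
      module
    have h0 : 0 ≤ (φ ((A' + u • B')ᴴ * (A' + u • B'))).re := by
      rw [hφ]
      exact trace_mul_psd_nonneg' hρ hpsd
    rw [hexp] at h0
    have h1 : φ (A' * A' + ((l : ℂ) ^ 2) • (B' * B') + u • (A' * B') - u • (B' * A'))
        = φ (A' * A') + ((l : ℂ) ^ 2) * φ (B' * B') + u * c := by
      rw [map_sub, map_add, map_add, _root_.map_smul, _root_.map_smul, _root_.map_smul,
        ← hcomm]
      simp only [smul_eq_mul]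
      ring
    rw [h1] at h0
    have h3 : (φ (A' * A') + ((l : ℂ) ^ 2) * φ (B' * B') + u * c).re
        = pA + l ^ 2 * pB + l * (-t) := by
      rw [hudef, htdef, hpAdef, hpBdef]
      simp [Complex.add_re, Complex.mul_re, Complex.mul_im, Complex.ofReal_re,
        Complex.ofReal_im, Complex.I_re, Complex.I_im, Complex.neg_re, Complex.neg_im,
        hcre, pow_two]
      try ring
    rw [h3] at h0
    exact h0
  have hp_quad : t ^ 2 ≤ 4 * (pA * pB) := by
    have h := quad_aux _ _ _ hpB0 hp_ineq
    rwa [neg_sq] at h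
  -- bridging to the statement's quantities
  have hsum1 : ∑ i, x i * (ρ * (∑ j, G (i, j))).trace.re = a := by
    have h1 : (ρ * A).trace = ∑ i, ((x i : ℂ)) * (ρ * (∑ j, G (i, j))).trace := by
      rw [← hxC, Finset.mul_sum, Matrix.trace_sum]
      exact Finset.sum_congr rfl fun i _ => by
        rw [Matrix.mul_smul, Matrix.trace_smul, smul_eq_mul]
    have h2 : a = ∑ i, x i * (ρ * (∑ j, G (i, j))).trace.re := by
      rw [hadef, h1, Complex.re_sum]
      exact Finset.sum_congr rfl fun i _ => Complex.re_ofReal_mul _ _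
    exact h2.symm
  have hsum1' : ∑ j, y j * (ρ * (∑ i, G (i, j))).trace.re = b := by
    have h1 : (ρ * B).trace = ∑ j, ((y j : ℂ)) * (ρ * (∑ i, G (i, j))).trace := by
      rw [← hyD, Finset.mul_sum, Matrix.trace_sum]
      exact Finset.sum_congr rfl fun j _ => by
        rw [Matrix.mul_smul, Matrix.trace_smul, smul_eq_mul]
    have h2 : b = ∑ j, y j * (ρ * (∑ i, G (i, j))).trace.re := by
      rw [hbdef, h1, Complex.re_sum]
      exact Finset.sum_congr rfl fun j _ => Complex.re_ofReal_mul _ _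
    exact h2.symm
  have hM2X' : M2X = ∑ i, ((x i : ℂ) * (x i : ℂ)) • (∑ j, G (i, j)) := by
    rw [hM2Xdef]
    simp only [Fintype.sum_prod_type]
    exact Finset.sum_congr rfl fun i _ => (Finset.smul_sum).symm
  have hM2Y' : M2Y = ∑ j, ((y j : ℂ) * (y j : ℂ)) • (∑ i, G (i, j)) := by
    rw [hM2Ydef]
    simp only [Fintype.sum_prod_type]
    rw [Finset.sum_comm]
    exact Finset.sum_congr rfl fun j _ => (Finset.smul_sum).symm
  have hsum2 : ∑ i, x i ^ 2 * (ρ * (∑ j, G (i, j))).trace.re = (φ M2X).re := by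
    have h1 : φ M2X = ∑ i, ((x i : ℂ) * (x i : ℂ)) * (ρ * (∑ j, G (i, j))).trace := by
      rw [hM2X', map_sum]
      exact Finset.sum_congr rfl fun i _ => by rw [_root_.map_smul, smul_eq_mul, hφ]
    rw [h1, Complex.re_sum]
    refine Finset.sum_congr rfl fun i _ => ?_
    rw [pow_two, ← Complex.ofReal_mul, Complex.re_ofReal_mul]
  have hsum2' : ∑ j, y j ^ 2 * (ρ * (∑ i, G (i, j))).trace.re = (φ M2Y).re := by
    have h1 : φ M2Y = ∑ j, ((y j : ℂ) * (y j : ℂ)) * (ρ * (∑ i, G (i, j))).trace := by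
      rw [hM2Y', map_sum]
      exact Finset.sum_congr rfl fun j _ => by rw [_root_.map_smul, smul_eq_mul, hφ]
    rw [h1, Complex.re_sum]
    refine Finset.sum_congr rfl fun j _ => ?_
    rw [pow_two, ← Complex.ofReal_mul, Complex.re_ofReal_mul]
  have hqA' : qA = (φ M2X).re - (φ (A * A)).re := by
    rw [hqAdef, hEA, map_sub, Complex.sub_re]
  have hqB' : qB = (φ M2Y).re - (φ (B * B)).re := by
    rw [hqBdef, hEB, map_sub, Complex.sub_re]
  have hpA' : pA = (φ (A * A)).re - a ^ 2 := by
    have e2 : A' * A' = ((a : ℂ) * (a : ℂ)) • 1 - (a : ℂ) • A - (a : ℂ) • A + A * A := by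
      rw [hA'def]
      calc ((a : ℂ) • 1 - A) * ((a : ℂ) • 1 - A)
          = ((a : ℂ) • 1 - A) * 1 * ((a : ℂ) • 1 - A) := by rw [Matrix.mul_one]
      _ = _ := by rw [cross_expand]; simp only [Matrix.one_mul, Matrix.mul_one]
    have e3 : φ (A' * A') = φ (A * A) - ((a ^ 2 : ℝ) : ℂ) := by
      rw [e2]
      simp only [map_add, map_sub, _root_.map_smul, smul_eq_mul, hφ1, hφA]
      push_cast
      ring
    rw [hpAdef, e3, Complex.sub_re, Complex.ofReal_re]
  have hpB' : pB = (φ (B * B)).re - b ^ 2 := by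
    have e2 : B' * B' = ((b : ℂ) * (b : ℂ)) • 1 - (b : ℂ) • B - (b : ℂ) • B + B * B := by
      rw [hB'def]
      calc ((b : ℂ) • 1 - B) * ((b : ℂ) • 1 - B)
          = ((b : ℂ) • 1 - B) * 1 * ((b : ℂ) • 1 - B) := by rw [Matrix.mul_one]
      _ = _ := by rw [cross_expand]; simp only [Matrix.one_mul, Matrix.mul_one]
    have e3 : φ (B' * B') = φ (B * B) - ((b ^ 2 : ℝ) : ℂ) := by
      rw [e2]
      simp only [map_add, map_sub, _root_.map_smul, smul_eq_mul, hφ1, hφB]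
      push_cast
      ring
    rw [hpBdef, e3, Complex.sub_re, Complex.ofReal_re]
  have hrad1 : (∑ i, x i ^ 2 * (ρ * (∑ j, G (i, j))).trace.re)
      - (∑ i, x i * (ρ * (∑ j, G (i, j))).trace.re) ^ 2 = qA + pA := by
    rw [hsum2, hsum1, hqA', hpA']
    ring
  have hrad2 : (∑ j, y j ^ 2 * (ρ * (∑ i, G (i, j))).trace.re)
      - (∑ j, y j * (ρ * (∑ i, G (i, j))).trace.re) ^ 2 = qB + pB := by
    rw [hsum2', hsum1', hqB', hpB']
    ring
  calc ‖c‖ = |t| := habs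
  _ ≤ Real.sqrt (qA + pA) * Real.sqrt (qB + pB) :=
      combine_aux hpA0 hqA0 hpB0 hqB0 hp_quad hq_quad
  _ = _ := by rw [hrad1, hrad2]
end

section
/- Let (K (i,k))_{i ∈ ι, k ∈ κ} (ι, κ finite) be d×d complex matrices with ∑_{i,k} (K (i,k))ᴴ K (i,k) = 1, and suppose the instrument is disturbance free: ∑_{i,k} K (i,k) ρ (K (i,k))ᴴ = ρ for every density matrix ρ on ℂ^d. Then the measured observable is trivial: there exists a probability vector (μ i)_{i ∈ ι} such that ∑_k (K (i,k))ᴴ K (i,k) = μ i · 1 for every i ∈ ι. -/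
set_option maxHeartbeats 1000000

open Matrix
open scoped ComplexOrder

namespace NoInfoAux

variable {d : ℕ}

lemma outer_quad (v w : Fin d → ℂ) :
    star w ⬝ᵥ (vecMulVec v (star v) *ᵥ w)
      = star (star v ⬝ᵥ w) * (star v ⬝ᵥ w) := by
  simp only [dotProduct, mulVec, vecMulVec_apply, Pi.star_apply, star_sum, star_mul',
    RingHom.id_apply, Finset.sum_mul, Finset.mul_sum, dotProduct]
  rw [Finset.sum_comm]
  refine Finset.sum_congr rfl fun i _ => Finset.sum_congr rfl fun j _ => ?_
  simp only [star_star]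
  ring

lemma outer_posSemidef (v : Fin d → ℂ) : (vecMulVec v (star v)).PosSemidef := by
  rw [posSemidef_iff_dotProduct_mulVec]
  constructor
  · ext i j
    simp [vecMulVec_apply, conjTranspose_apply, mul_comm]
  · intro x
    rw [outer_quad]
    exact star_mul_self_nonneg _

lemma mul_outer_mul (K : Matrix (Fin d) (Fin d) ℂ) (v : Fin d → ℂ) :
    K * vecMulVec v (star v) * Kᴴ = vecMulVec (K *ᵥ v) (star (K *ᵥ v)) := by
  ext i j
  simp only [mul_apply, vecMulVec_apply, mulVec, conjTranspose_apply, Pi.star_apply,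
    dotProduct, star_sum, star_mul', Finset.sum_mul, Finset.mul_sum]
  refine Finset.sum_congr rfl fun a _ => Finset.sum_congr rfl fun b _ => ?_
  ring

lemma quad_sum {J : Type*} [Fintype J] (M : J → Matrix (Fin d) (Fin d) ℂ) (w : Fin d → ℂ) :
    star w ⬝ᵥ ((∑ p, M p) *ᵥ w) = ∑ p, star w ⬝ᵥ (M p *ᵥ w) := by
  have h1 : ((∑ p, M p) *ᵥ w) = ∑ p, M p *ᵥ w := by
    ext i
    simp only [mulVec, dotProduct, Matrix.sum_apply, Finset.sum_apply, Finset.sum_mul]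
    exact Finset.sum_comm
  rw [h1]
  simp only [dotProduct, Finset.sum_apply, Finset.mul_sum]
  exact Finset.sum_comm

lemma outer_le_imp (v ψ : Fin d → ℂ) (hψ : ψ ≠ 0)
    (h : ∀ w, star w ⬝ᵥ (vecMulVec v (star v) *ᵥ w)
        ≤ star w ⬝ᵥ (vecMulVec ψ (star ψ) *ᵥ w)) :
    ∃ c : ℂ, v = c • ψ := by
  set s : ℂ := star ψ ⬝ᵥ ψ with hs
  have hs0 : s ≠ 0 := fun h0 => hψ (dotProduct_star_self_eq_zero.1 h0)
  set w : Fin d → ℂ := s • v - (star ψ ⬝ᵥ v) • ψ with hw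
  have hψw : star ψ ⬝ᵥ w = 0 := by
    simp [hw, hs, dotProduct_sub, dotProduct_smul, smul_eq_mul, mul_comm]
  have hle := h w
  rw [outer_quad, outer_quad, hψw] at hle
  have hge : (0 : ℂ) ≤ star (star v ⬝ᵥ w) * (star v ⬝ᵥ w) := star_mul_self_nonneg _
  have hvw : star v ⬝ᵥ w = 0 := by
    have h0 : star (star v ⬝ᵥ w) * (star v ⬝ᵥ w) = 0 := le_antisymm (by simpa using hle) hge
    have h4 : ((Complex.normSq (star v ⬝ᵥ w) : ℝ) : ℂ) = 0 := by
      rw [← Complex.mul_conj]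
      simpa [Complex.star_def, mul_comm] using h0
    exact Complex.normSq_eq_zero.mp (by exact_mod_cast h4)
  have key : s * (star v ⬝ᵥ v) = (star ψ ⬝ᵥ v) * (star v ⬝ᵥ ψ) := by
    have := hvw
    simp only [hw, dotProduct_sub, dotProduct_smul, smul_eq_mul] at this
    linear_combination this
  refine ⟨(star ψ ⬝ᵥ v) / s, ?_⟩
  have hu : star (v - ((star ψ ⬝ᵥ v) / s) • ψ) ⬝ᵥ (v - ((star ψ ⬝ᵥ v) / s) • ψ) = 0 := by
    simp only [star_sub, star_smul, sub_dotProduct, dotProduct_sub, smul_dotProduct,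
      dotProduct_smul, smul_eq_mul, star_div₀, star_star]
    have h1 : star s = s := by
      simp [hs, dotProduct, star_sum, mul_comm]
    rw [h1]
    field_simp
    ring_nf
    have h3 : star (star ψ ⬝ᵥ v) = star v ⬝ᵥ ψ := by
      simp [dotProduct, star_sum, mul_comm]
    linear_combination s * key
  have h5 := dotProduct_star_self_eq_zero.1 hu
  linear_combination (norm := module) h5

lemma scalar_of_eigen (K : Matrix (Fin d) (Fin d) ℂ)
    (h : ∀ ψ : Fin d → ℂ, ψ ≠ 0 → ∃ c : ℂ, K *ᵥ ψ = c • ψ) :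
    ∃ c : ℂ, K = c • 1 := by
  rcases Nat.eq_zero_or_pos d with hd | hd
  · exact ⟨0, by subst hd; ext i j; exact absurd i.2 (by omega)⟩
  have hsingle : ∀ m : Fin d, (Pi.single m (1:ℂ) : Fin d → ℂ) ≠ 0 := by
    intro m hm
    have := congrFun hm m
    simp at this
  choose c hc using fun m => h (Pi.single m 1) (hsingle m)
  have hKent : ∀ i j, K i j = if i = j then c j else 0 := by
    intro i j
    have := congrFun (hc j) i
    simp only [Pi.smul_apply, Pi.single_apply, smul_eq_mul] at this
    rw [mulVec, dotProduct] at this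
    simp only [Pi.single_apply, mul_ite, mul_one, mul_zero] at this
    rw [Finset.sum_ite_eq' Finset.univ j (fun b => K i b)] at this
    simpa [eq_comm] using this
  have hcconst : ∀ m n : Fin d, c m = c n := by
    intro m n
    by_cases hmn : m = n
    · rw [hmn]
    · set ψ : Fin d → ℂ := Pi.single m 1 + Pi.single n 1 with hψ
      have hψ0 : ψ ≠ 0 := by
        intro h0
        have := congrFun h0 m
        simp [hψ, Pi.single_apply, hmn] at this
      obtain ⟨e, he⟩ := h ψ hψ0
      have hKψ : K *ᵥ ψ = c m • (Pi.single m 1 : Fin d → ℂ)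
          + c n • (Pi.single n 1 : Fin d → ℂ) := by
        rw [hψ, mulVec_add, hc m, hc n]
      have hm := congrFun (hKψ ▸ he) m
      have hn := congrFun (hKψ ▸ he) n
      simp [hψ, Pi.single_apply, hmn, Ne.symm hmn] at hm hn
      rw [hm, hn]
  refine ⟨c ⟨0, hd⟩, ?_⟩
  ext i j
  rw [hKent i j]
  by_cases hij : i = j <;> simp [hij, one_apply, hcconst j ⟨0, hd⟩]

end NoInfoAux

open NoInfoAux

/-- No measurement without disturbance: if the total channel of an instrument
(in Kraus form) is the identity on all density matrices, then the measured POVM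
is trivial, i.e. each effect is a multiple μ i of the identity, with (μ i) a
probability vector. -/
theorem no_information_without_disturbance {d : ℕ} (hd : 0 < d)
    {ι κ : Type} [Fintype ι] [Fintype κ]
    (K : ι → κ → Matrix (Fin d) (Fin d) ℂ)
    (hK : ∑ i, ∑ k, (K i k)ᴴ * K i k = 1)
    (hid : ∀ ρ : Matrix (Fin d) (Fin d) ℂ, ρ.PosSemidef → ρ.trace = 1 →
      ∑ i, ∑ k, K i k * ρ * (K i k)ᴴ = ρ) :
    ∃ μ : ι → ℝ, (∀ i, 0 ≤ μ i) ∧ (∑ i, μ i = 1) ∧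
      ∀ i, ∑ k, (K i k)ᴴ * K i k = ((μ i : ℝ) : ℂ) • 1 := by
  classical
  -- Step 1: the channel fixes all outer products
  have hout : ∀ ψ : Fin d → ℂ, ψ ≠ 0 →
      ∑ i, ∑ k, K i k * vecMulVec ψ (star ψ) * (K i k)ᴴ = vecMulVec ψ (star ψ) := by
    intro ψ hψ
    set r : ℝ := ∑ j, Complex.normSq (ψ j) with hr
    have hr0 : 0 < r := by
      have hnn : ∀ j ∈ Finset.univ, (0:ℝ) ≤ Complex.normSq (ψ j) :=
        fun j _ => Complex.normSq_nonneg _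
      rcases (Finset.sum_nonneg hnn).lt_or_eq with h | h
      · exact h
      · exfalso
        apply hψ
        funext j
        have := (Finset.sum_eq_zero_iff_of_nonneg hnn).1 h.symm j (Finset.mem_univ j)
        exact Complex.normSq_eq_zero.mp this
    set cr : ℂ := ((r⁻¹ : ℝ) : ℂ) with hcr
    have hcrpos : (0:ℂ) ≤ cr := by
      rw [hcr]
      exact_mod_cast Complex.zero_le_real.2 (inv_nonneg.2 hr0.le)
    have htrP : (vecMulVec ψ (star ψ)).trace = (r : ℂ) := by
      simp only [trace, diag_apply, vecMulVec_apply, Pi.star_apply, hr]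
      push_cast
      exact Finset.sum_congr rfl fun j _ => (Complex.mul_conj _)
    have hPSD : (cr • vecMulVec ψ (star ψ)).PosSemidef := by
      rw [posSemidef_iff_dotProduct_mulVec]
      constructor
      · show (cr • vecMulVec ψ (star ψ))ᴴ = _
        rw [conjTranspose_smul, (outer_posSemidef ψ).1.eq]
        congr 1
        simp [hcr, Complex.star_def]
      · intro x
        rw [smul_mulVec, dotProduct_smul, smul_eq_mul]
        exact mul_nonneg hcrpos ((outer_posSemidef ψ).dotProduct_mulVec_nonneg x)
    have htr : (cr • vecMulVec ψ (star ψ)).trace = 1 := by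
      rw [trace_smul, htrP, smul_eq_mul, hcr]
      rw [← Complex.ofReal_mul]
      rw [inv_mul_cancel₀ hr0.ne']
      simp
    have hch := hid _ hPSD htr
    have hpull : ∑ i, ∑ k, K i k * (cr • vecMulVec ψ (star ψ)) * (K i k)ᴴ
        = cr • ∑ i, ∑ k, K i k * vecMulVec ψ (star ψ) * (K i k)ᴴ := by
      rw [Finset.smul_sum]
      refine Finset.sum_congr rfl fun i _ => ?_
      rw [Finset.smul_sum]
      refine Finset.sum_congr rfl fun k _ => ?_
      rw [mul_smul_comm, smul_mul_assoc]
    rw [hpull] at hch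
    have hcr0 : cr ≠ 0 := by
      simp [hcr, hr0.ne']
    exact smul_right_injective _ hcr0 hch
  -- Step 2: each Kraus operator has every nonzero vector as eigenvector
  have heig : ∀ (i : ι) (k : κ) (ψ : Fin d → ℂ), ψ ≠ 0 →
      ∃ c : ℂ, K i k *ᵥ ψ = c • ψ := by
    intro i0 k0 ψ hψ
    apply outer_le_imp _ _ hψ
    intro w
    rw [← mul_outer_mul]
    have hsum := hout ψ hψ
    rw [← Fintype.sum_prod_type'] at hsum
    have hquad : star w ⬝ᵥ ((∑ p : ι × κ, K p.1 p.2 * vecMulVec ψ (star ψ) * (K p.1 p.2)ᴴ) *ᵥ w)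
        = ∑ p : ι × κ, star w ⬝ᵥ ((K p.1 p.2 * vecMulVec ψ (star ψ) * (K p.1 p.2)ᴴ) *ᵥ w) :=
      quad_sum _ w
    have hA : star w ⬝ᵥ (vecMulVec ψ (star ψ) *ᵥ w)
        = ∑ p : ι × κ, star w ⬝ᵥ ((K p.1 p.2 * vecMulVec ψ (star ψ) * (K p.1 p.2)ᴴ) *ᵥ w) :=
      ((congrArg (fun M => star w ⬝ᵥ (M *ᵥ w)) hsum).symm).trans hquad
    have hnn : ∀ (p : ι × κ) (_ : p ∈ Finset.univ),
        (0:ℂ) ≤ star w ⬝ᵥ ((K p.1 p.2 * vecMulVec ψ (star ψ) * (K p.1 p.2)ᴴ) *ᵥ w) :=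
      fun p _ => ((outer_posSemidef ψ).mul_mul_conjTranspose_same (K p.1 p.2)).dotProduct_mulVec_nonneg w
    have hle1 := Finset.single_le_sum (f := fun p : ι × κ =>
      star w ⬝ᵥ ((K p.1 p.2 * vecMulVec ψ (star ψ) * (K p.1 p.2)ᴴ) *ᵥ w)) hnn
      (Finset.mem_univ (i0, k0))
    refine le_trans ?_ (le_of_eq hA.symm)
    simpa using hle1
  -- Step 3: each Kraus operator is a scalar multiple of the identity
  have hscal : ∀ (i : ι) (k : κ), ∃ c : ℂ, K i k = c • 1 :=
    fun i k => scalar_of_eigen (K i k) (heig i k)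
  choose c hc using hscal
  refine ⟨fun i => ∑ k, Complex.normSq (c i k), ?_, ?_, ?_⟩
  · intro i
    exact Finset.sum_nonneg fun k _ => Complex.normSq_nonneg _
  · -- sum of μ is 1
    have heff : ∀ i, ∑ k, (K i k)ᴴ * K i k
        = (((∑ k, Complex.normSq (c i k) : ℝ)) : ℂ) • (1 : Matrix (Fin d) (Fin d) ℂ) := by
      intro i
      push_cast
      rw [Finset.sum_smul]
      refine Finset.sum_congr rfl fun k _ => ?_
      rw [hc i k, conjTranspose_smul, conjTranspose_one, smul_mul_assoc, mul_smul_comm,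
        one_mul, smul_smul]
      congr 1
      rw [Complex.normSq_eq_conj_mul_self]
      rfl
    have h1 : ∑ i, (((∑ k, Complex.normSq (c i k) : ℝ)) : ℂ) • (1 : Matrix (Fin d) (Fin d) ℂ)
        = 1 := (Finset.sum_congr rfl fun i _ => (heff i).symm).trans hK
    rw [← Finset.sum_smul] at h1
    have h2 : (((∑ i, ∑ k, Complex.normSq (c i k) : ℝ)) : ℂ)
        • (1 : Matrix (Fin d) (Fin d) ℂ) = 1 := by
      have hsc : (((∑ i, ∑ k, Complex.normSq (c i k) : ℝ)) : ℂ)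
          = ∑ i, (((∑ k, Complex.normSq (c i k) : ℝ)) : ℂ) := by push_cast; rfl
      rw [hsc]
      exact h1
    have h2' := congrFun (congrFun h2 ⟨0, hd⟩) ⟨0, hd⟩
    simp only [Matrix.smul_apply, one_apply_eq, smul_eq_mul, mul_one] at h2'
    exact_mod_cast h2'
  · intro i
    push_cast
    rw [Finset.sum_smul]
    refine Finset.sum_congr rfl fun k _ => ?_
    rw [hc i k, conjTranspose_smul, conjTranspose_one, smul_mul_assoc, mul_smul_comm,
      one_mul, smul_smul]
    congr 1
    rw [Complex.normSq_eq_conj_mul_self]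
    rfl
end

section
/- Let a, b be unit vectors in ℝ³ and set A = a·σ, B = b·σ. Let (G (s,t))_{s,t ∈ {1,−1}} be a POVM on ℂ² (four positive semidefinite 2×2 matrices summing to 1), and let M₁(s) = ∑_t G (s,t), M₂(t) = ∑_s G (s,t) be its marginals. Write M₁(1) = ½(c₀·1 + c·σ) and M₂(1) = ½(d₀·1 + d·σ) with c₀, d₀ ∈ ℝ and c, d ∈ ℝ³. Then (2|1 − c₀| + 2‖a − c‖) + (2|1 − d₀| + 2‖b − d‖) ≥ √2 (‖a − b‖ + ‖a + b‖ − 2). -/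
open Matrix
open scoped ComplexOrder

/-- The Pauli matrices. -/
noncomputable def σ₁ : Matrix (Fin 2) (Fin 2) ℂ := !![0, 1; 1, 0]
noncomputable def σ₂ : Matrix (Fin 2) (Fin 2) ℂ := !![0, -Complex.I; Complex.I, 0]
noncomputable def σ₃ : Matrix (Fin 2) (Fin 2) ℂ := !![1, 0; 0, -1]

/-- v·σ for a vector v ∈ ℝ³. -/
noncomputable def dotσ (v : EuclideanSpace ℝ (Fin 3)) : Matrix (Fin 2) (Fin 2) ℂ :=
  ((v 0 : ℝ) : ℂ) • σ₁ + ((v 1 : ℝ) : ℂ) • σ₂ + ((v 2 : ℝ) : ℂ) • σ₃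

/-- The Bloch vector of a 2×2 matrix (defined symmetrically so that it is
additive and agrees with the usual Bloch vector for Hermitian matrices). -/
noncomputable def γv (M : Matrix (Fin 2) (Fin 2) ℂ) : EuclideanSpace ℝ (Fin 3) :=
  WithLp.toLp 2 ![(M 0 1).re + (M 1 0).re, (M 1 0).im - (M 0 1).im, (M 0 0).re - (M 1 1).re]

lemma γv_add (M N : Matrix (Fin 2) (Fin 2) ℂ) : γv (M + N) = γv M + γv N := by
  ext i
  fin_cases i <;>
    simp [γv, Matrix.add_apply, PiLp.add_apply] <;> ring

lemma γv_one : γv (1 : Matrix (Fin 2) (Fin 2) ℂ) = 0 := by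
  ext i
  fin_cases i <;> simp [γv, Matrix.one_apply]

lemma γv_half (r : ℝ) (v : EuclideanSpace ℝ (Fin 3)) :
    γv ((1/2 : ℂ) • (((r : ℝ) : ℂ) • 1 + dotσ v)) = v := by
  ext i
  fin_cases i <;>
    simp [γv, dotσ, σ₁, σ₂, σ₃, Matrix.smul_apply, Matrix.add_apply,
      Matrix.one_apply] <;> ring

/-- For a positive semidefinite 2×2 matrix, the norm of the Bloch vector is at
most the (real part of the) trace. -/
lemma γv_norm_le (M : Matrix (Fin 2) (Fin 2) ℂ) (hM : M.PosSemidef) :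
    ‖γv M‖ ≤ (M 0 0).re + (M 1 1).re := by
  have herm : star (M 1 0) = M 0 1 := hM.isHermitian.apply 0 1
  have h00i : (M 0 0).im = 0 := by
    have := congrArg Complex.im (hM.isHermitian.apply 0 0)
    simp [Complex.conj_im] at this; linarith
  have h11i : (M 1 1).im = 0 := by
    have := congrArg Complex.im (hM.isHermitian.apply 1 1)
    simp [Complex.conj_im] at this; linarith
  have hdet : 0 ≤ M.det := by
    exact hM.det_nonneg
  rw [Matrix.det_fin_two, Complex.le_def] at hdet
  simp only [Complex.sub_re, Complex.mul_re, Complex.zero_re, Complex.zero_im,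
    Complex.sub_im, Complex.mul_im] at hdet
  have hx : 0 ≤ (M 0 0).re := by
    simpa using hM.re_dotProduct_nonneg (Pi.single 0 1)
  have hy : 0 ≤ (M 1 1).re := by
    simpa using hM.re_dotProduct_nonneg (Pi.single 1 1)
  have h01re : (M 0 1).re = (M 1 0).re := by rw [← herm]; simp
  have h01im : (M 0 1).im = - (M 1 0).im := by rw [← herm]; simp
  rw [EuclideanSpace.norm_eq]
  have hs : Real.sqrt ((((M 0 0).re + (M 1 1).re))^2) = (M 0 0).re + (M 1 1).re :=
    Real.sqrt_sq (by linarith)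
  rw [← hs]
  apply Real.sqrt_le_sqrt
  rw [Fin.sum_univ_three]
  show ‖γv M 0‖^2 + ‖γv M 1‖^2 + ‖γv M 2‖^2 ≤ _
  have e0 : γv M 0 = (M 0 1).re + (M 1 0).re := rfl
  have e1 : γv M 1 = (M 1 0).im - (M 0 1).im := rfl
  have e2 : γv M 2 = (M 0 0).re - (M 1 1).re := rfl
  rw [e0, e1, e2]
  simp only [Real.norm_eq_abs, sq_abs]
  nlinarith [hdet.1, sq_nonneg ((M 1 0).im), sq_nonneg ((M 1 0).re)]

open scoped RealInnerProductSpace in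
set_option maxHeartbeats 800000 in
/-- The purely geometric part of the qubit error relation. -/
lemma geom_ineq {E : Type*} [NormedAddCommGroup E] [InnerProductSpace ℝ E]
    (a b c d : E) (ha : ‖a‖ = 1) (hb : ‖b‖ = 1)
    (hcd : ‖c + d‖ + ‖c - d‖ ≤ 2) :
    Real.sqrt 2 * (‖a - b‖ + ‖a + b‖ - 2) ≤ 2 * ‖a - c‖ + 2 * ‖b - d‖ := by
  set α := ‖a - b‖ with hα
  set β := ‖a + b‖ with hβ
  by_cases hdeg : α + β ≤ 2
  · have h1 : Real.sqrt 2 * (α + β - 2) ≤ 0 :=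
      mul_nonpos_of_nonneg_of_nonpos (Real.sqrt_nonneg 2) (by linarith)
    have := norm_nonneg (a - c); have := norm_nonneg (b - d)
    linarith
  · push_neg at hdeg
    have hβ2 : β ≤ 2 := by
      calc β ≤ ‖a‖ + ‖b‖ := norm_add_le a b
      _ = 2 := by rw [ha, hb]; norm_num
    have hα2 : α ≤ 2 := by
      calc α ≤ ‖a‖ + ‖b‖ := norm_sub_le a b
      _ = 2 := by rw [ha, hb]; norm_num
    have hαpos : 0 < α := by linarith
    have hβpos : 0 < β := by linarith
    have hna : α^2 = 2 - 2*⟪a,b⟫ := by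
      have hn : α^2 = ‖a‖^2 - 2*⟪a,b⟫ + ‖b‖^2 := norm_sub_sq_real a b
      rw [ha, hb] at hn; linarith
    have hnb : β^2 = 2 + 2*⟪a,b⟫ := by
      have hn : β^2 = ‖a‖^2 + 2*⟪a,b⟫ + ‖b‖^2 := norm_add_sq_real a b
      rw [ha, hb] at hn; linarith
    have hsa : ⟪a,a⟫ = 1 := by
      rw [real_inner_self_eq_norm_sq, ha]; norm_num
    have hsb : ⟪b,b⟫ = 1 := by
      rw [real_inner_self_eq_norm_sq, hb]; norm_num
    have hcomm : ⟪b,a⟫ = ⟪a,b⟫ := real_inner_comm a b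
    have hip : ⟪a - b, a + b⟫ = 0 := by
      rw [inner_sub_left, inner_add_right, inner_add_right, hsa, hsb, hcomm]; ring
    have hab2 : ⟪a - b, a⟫ = α^2 / 2 := by
      rw [inner_sub_left, hsa, hcomm, hna]; ring
    have hab3 : ⟪a + b, a⟫ = β^2 / 2 := by
      rw [inner_add_left, hsa, hcomm, hnb]; ring
    have hab4 : ⟪a - b, b⟫ = -(α^2 / 2) := by
      rw [inner_sub_left, hsb, hna]; ring
    have hab5 : ⟪a + b, b⟫ = β^2 / 2 := by
      rw [inner_add_left, hsb, hnb]; ring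
    set u : E := α⁻¹ • (a - b) with hu
    set v : E := β⁻¹ • (a + b) with hv
    have hnu : ‖u‖ = 1 := by
      rw [hu, norm_smul, norm_inv, Real.norm_eq_abs, abs_of_pos hαpos, ← hα,
        inv_mul_cancel₀ hαpos.ne']
    have hnv : ‖v‖ = 1 := by
      rw [hv, norm_smul, norm_inv, Real.norm_eq_abs, abs_of_pos hβpos, ← hβ,
        inv_mul_cancel₀ hβpos.ne']
    have huv : ⟪u, v⟫ = 0 := by
      rw [hu, hv, real_inner_smul_left, real_inner_smul_right, hip]; ring
    set s2 := Real.sqrt 2 with hs2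
    have hs2pos : 0 < s2 := by positivity
    have hs2sq : s2 * s2 = 2 := Real.mul_self_sqrt (by norm_num)
    set w₁ : E := s2⁻¹ • (u + v) with hw₁
    set w₂ : E := s2⁻¹ • (v - u) with hw₂
    have hnw₁ : ‖w₁‖ ≤ 1 := by
      rw [hw₁, norm_smul, norm_inv, Real.norm_eq_abs, abs_of_pos hs2pos]
      have h1 : ‖u + v‖^2 = 2 := by
        rw [norm_add_sq_real, hnu, hnv, huv]; ring
      have h2 : ‖u + v‖ = s2 := by
        rw [hs2, ← h1, Real.sqrt_sq (norm_nonneg _)]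
      rw [h2, inv_mul_cancel₀ hs2pos.ne']
    have hnw₂ : ‖w₂‖ ≤ 1 := by
      rw [hw₂, norm_smul, norm_inv, Real.norm_eq_abs, abs_of_pos hs2pos]
      have huv' : ⟪v, u⟫ = 0 := by rw [real_inner_comm]; exact huv
      have h1 : ‖v - u‖^2 = 2 := by
        rw [norm_sub_sq_real, hnu, hnv, huv']; ring
      have h2 : ‖v - u‖ = s2 := by
        rw [hs2, ← h1, Real.sqrt_sq (norm_nonneg _)]
      rw [h2, inv_mul_cancel₀ hs2pos.ne']
    have key1 : ⟪w₁, a - c⟫ ≤ ‖a - c‖ := by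
      have h := real_inner_le_norm w₁ (a - c)
      have h2 : ‖w₁‖ * ‖a - c‖ ≤ 1 * ‖a - c‖ :=
        mul_le_mul_of_nonneg_right hnw₁ (norm_nonneg _)
      rw [one_mul] at h2; linarith
    have key2 : ⟪w₂, b - d⟫ ≤ ‖b - d‖ := by
      have h := real_inner_le_norm w₂ (b - d)
      have h2 : ‖w₂‖ * ‖b - d‖ ≤ 1 * ‖b - d‖ :=
        mul_le_mul_of_nonneg_right hnw₂ (norm_nonneg _)
      rw [one_mul] at h2; linarith
    have hw₁a : ⟪w₁, a⟫ = s2⁻¹ * ((α + β)/2) := by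
      rw [hw₁, real_inner_smul_left, hu, hv, inner_add_left,
        real_inner_smul_left, real_inner_smul_left, hab2, hab3]
      field_simp
    have hw₂b : ⟪w₂, b⟫ = s2⁻¹ * ((α + β)/2) := by
      rw [hw₂, real_inner_smul_left, hv, hu, inner_sub_left,
        real_inner_smul_left, real_inner_smul_left, hab4, hab5]
      field_simp
      ring
    have hbc : ⟪w₁, c⟫ + ⟪w₂, d⟫ ≤ s2⁻¹ * 2 := by
      have expand : ⟪w₁, c⟫ + ⟪w₂, d⟫
          = s2⁻¹ * (α⁻¹ * ⟪a - b, c - d⟫ + β⁻¹ * ⟪a + b, c + d⟫) := by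
        simp only [hw₁, hw₂, hu, hv, real_inner_smul_left, inner_add_left,
          inner_sub_left, inner_sub_right, inner_add_right]
        ring
      rw [expand]
      have i1 : α⁻¹ * ⟪a - b, c - d⟫ ≤ ‖c - d‖ := by
        have b1 : ⟪a - b, c - d⟫ ≤ α * ‖c - d‖ := by
          have := real_inner_le_norm (a - b) (c - d); rw [← hα] at this; exact this
        have step : α⁻¹ * ⟪a - b, c - d⟫ ≤ α⁻¹ * (α * ‖c - d‖) :=
          mul_le_mul_of_nonneg_left b1 (by positivity)
        have : α⁻¹ * (α * ‖c - d‖) = ‖c - d‖ := by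
          field_simp
        linarith
      have i2 : β⁻¹ * ⟪a + b, c + d⟫ ≤ ‖c + d‖ := by
        have b2 : ⟪a + b, c + d⟫ ≤ β * ‖c + d‖ := by
          have := real_inner_le_norm (a + b) (c + d); rw [← hβ] at this; exact this
        have step : β⁻¹ * ⟪a + b, c + d⟫ ≤ β⁻¹ * (β * ‖c + d‖) :=
          mul_le_mul_of_nonneg_left b2 (by positivity)
        have : β⁻¹ * (β * ‖c + d‖) = ‖c + d‖ := by
          field_simp
        linarith
      have hsum : α⁻¹ * ⟪a - b, c - d⟫ + β⁻¹ * ⟪a + b, c + d⟫ ≤ 2 := by linarith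
      exact mul_le_mul_of_nonneg_left hsum (by positivity)
    have split1 : ⟪w₁, a - c⟫ = ⟪w₁, a⟫ - ⟪w₁, c⟫ := inner_sub_right w₁ a c
    have split2 : ⟪w₂, b - d⟫ = ⟪w₂, b⟫ - ⟪w₂, d⟫ := inner_sub_right w₂ b d
    rw [split1, hw₁a] at key1
    rw [split2, hw₂b] at key2
    have final : s2⁻¹ * (α + β) - s2⁻¹ * 2 ≤ ‖a - c‖ + ‖b - d‖ := by linarith
    have heq : s2 * (α + β - 2) = 2 * (s2⁻¹ * (α + β) - s2⁻¹ * 2) := by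
      have hs2ne : s2 ≠ 0 := hs2pos.ne'
      field_simp
      nlinarith [hs2sq]
    rw [heq]
    linarith


/-- Qubit error relation: for any joint approximate measurement G of the sharp
±1-valued qubit observables A = a·σ, B = b·σ, with marginals M₁(+1)=½(c₀1+c·σ)
and M₂(+1)=½(d₀1+d·σ), the sum of the squared worst-case Wasserstein errors is
bounded below by √2(‖a−b‖+‖a+b‖−2). -/
theorem qubit_error_relation (a b : EuclideanSpace ℝ (Fin 3))
    (ha : ‖a‖ = 1) (hb : ‖b‖ = 1)
    (G : Fin 2 → Fin 2 → Matrix (Fin 2) (Fin 2) ℂ)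
    (hGpos : ∀ s t, (G s t).PosSemidef) (hGsum : ∑ s, ∑ t, G s t = 1)
    (c₀ d₀ : ℝ) (c d : EuclideanSpace ℝ (Fin 3))
    (hM₁ : ∑ t, G 0 t = (1 / 2 : ℂ) • (((c₀ : ℝ) : ℂ) • 1 + dotσ c))
    (hM₂ : ∑ s, G s 0 = (1 / 2 : ℂ) • (((d₀ : ℝ) : ℂ) • 1 + dotσ d)) :
    Real.sqrt 2 * (‖a - b‖ + ‖a + b‖ - 2) ≤
      (2 * |1 - c₀| + 2 * ‖a - c‖) + (2 * |1 - d₀| + 2 * ‖b - d‖) := by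
  rw [Fin.sum_univ_two] at hM₁ hM₂
  simp only [Fin.sum_univ_two] at hGsum
  -- Bloch vector identities
  have hc : γv (G 0 0) + γv (G 0 1) = c := by
    rw [← γv_add, hM₁, γv_half]
  have hd : γv (G 0 0) + γv (G 1 0) = d := by
    rw [← γv_add, hM₂, γv_half]
  have hzero : γv (G 0 0) + γv (G 0 1) + (γv (G 1 0) + γv (G 1 1)) = 0 := by
    rw [← γv_add, ← γv_add, ← γv_add, hGsum, γv_one]
  -- trace identities
  have e00 := congrArg (fun M : Matrix (Fin 2) (Fin 2) ℂ => (M 0 0).re) hGsum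
  have e11 := congrArg (fun M : Matrix (Fin 2) (Fin 2) ℂ => (M 1 1).re) hGsum
  simp only [Matrix.add_apply, Matrix.one_apply_eq, Complex.add_re,
    Complex.one_re] at e00 e11
  -- norms of Bloch vectors bounded by traces
  have hγ00 := γv_norm_le _ (hGpos 0 0)
  have hγ01 := γv_norm_le _ (hGpos 0 1)
  have hγ10 := γv_norm_le _ (hGpos 1 0)
  have hγ11 := γv_norm_le _ (hGpos 1 1)
  -- joint-measurability constraint
  have hv1 : c + d = γv (G 0 0) - γv (G 1 1) := by
    rw [← hc, ← hd]
    have h11 : γv (G 1 1)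
        = -(γv (G 0 0) + γv (G 0 1) + γv (G 1 0)) := by
      have := hzero
      abel_nf at this ⊢
      linear_combination (norm := abel) this
    rw [h11]
    abel
  have hv2 : c - d = γv (G 0 1) - γv (G 1 0) := by
    rw [← hc, ← hd]; abel
  have hn1 : ‖c + d‖ ≤ ‖γv (G 0 0)‖ + ‖γv (G 1 1)‖ := by
    rw [hv1]; exact norm_sub_le _ _
  have hn2 : ‖c - d‖ ≤ ‖γv (G 0 1)‖ + ‖γv (G 1 0)‖ := by
    rw [hv2]; exact norm_sub_le _ _
  have hcd : ‖c + d‖ + ‖c - d‖ ≤ 2 := by linarith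
  have hgeom := geom_ineq a b c d ha hb hcd
  have h1 : 0 ≤ |1 - c₀| := abs_nonneg _
  have h2 : 0 ≤ |1 - d₀| := abs_nonneg _
  linarith
end

section
/- Let a, b be unit vectors in ℝ³. Let (G (s,t))_{s,t ∈ {1,−1}} be a POVM on ℂ² with marginals M₁(s) = ∑_t G (s,t), M₂(t) = ∑_s G (s,t), and suppose the marginals are covariant: M₁(1) = ½(1 + c·σ) and M₂(1) = ½(1 + d·σ) for some c, d ∈ ℝ³ (necessarily ‖c‖ ≤ 1, ‖d‖ ≤ 1). Then √(1 − ‖c‖² + ‖a − c‖²) + √(1 − ‖d‖² + ‖b − d‖²) ≥ (1/√2)(‖a − b‖ + ‖a + b‖ − 2). -/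
open Matrix
open scoped ComplexOrder

noncomputable def vecOf (M : Matrix (Fin 2) (Fin 2) ℂ) : EuclideanSpace ℝ (Fin 3) :=
  !₂[(M 0 1).re + (M 1 0).re, (M 1 0).im - (M 0 1).im, (M 0 0).re - (M 1 1).re]

noncomputable def trOf (M : Matrix (Fin 2) (Fin 2) ℂ) : ℝ := (M 0 0).re + (M 1 1).re

lemma vecOf_add (A B : Matrix (Fin 2) (Fin 2) ℂ) : vecOf (A + B) = vecOf A + vecOf B := by
  ext i
  fin_cases i <;>
    simp [vecOf, Matrix.add_apply] <;> ring

lemma trOf_add (A B : Matrix (Fin 2) (Fin 2) ℂ) : trOf (A + B) = trOf A + trOf B := by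
  simp [trOf, Matrix.add_apply]; ring

lemma vecOf_covariant (c : EuclideanSpace ℝ (Fin 3)) :
    vecOf ((1 / 2 : ℂ) • (1 + dotσ c)) = c := by
  ext i
  fin_cases i <;>
    simp [vecOf, dotσ, σ₁, σ₂, σ₃, Matrix.add_apply, Matrix.smul_apply, Matrix.one_apply,
      Complex.ext_iff] <;> ring

lemma trOf_covariant (c : EuclideanSpace ℝ (Fin 3)) :
    trOf ((1 / 2 : ℂ) • (1 + dotσ c)) = 1 := by
  simp [trOf, dotσ, σ₁, σ₂, σ₃, Matrix.add_apply, Matrix.smul_apply, Matrix.one_apply]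
  ring

lemma det_nonneg_psd (M : Matrix (Fin 2) (Fin 2) ℂ) (h : M.PosSemidef) : (0:ℂ) ≤ M.det := by
  rw [h.1.det_eq_prod_eigenvalues]
  norm_cast
  exact RCLike.ofReal_nonneg.mpr (Finset.prod_nonneg fun i _ => h.eigenvalues_nonneg i)

lemma norm_vecOf_le (M : Matrix (Fin 2) (Fin 2) ℂ) (h : M.PosSemidef) :
    ‖vecOf M‖ ≤ trOf M := by
  have h10 : M 1 0 = star (M 0 1) := (h.1.apply 1 0).symm
  have h00 : (0:ℂ) ≤ M 0 0 := h.diag_nonneg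
  have h11 : (0:ℂ) ≤ M 1 1 := h.diag_nonneg
  have hdet : (0:ℂ) ≤ M.det := det_nonneg_psd M h
  rw [Matrix.det_fin_two, h10] at hdet
  have h00' : 0 ≤ (M 0 0).re ∧ (M 0 0).im = 0 := by
    constructor
    · exact (Complex.le_def.mp h00).1
    · exact ((Complex.le_def.mp h00).2).symm
  have h11' : 0 ≤ (M 1 1).re ∧ (M 1 1).im = 0 := by
    constructor
    · exact (Complex.le_def.mp h11).1
    · exact ((Complex.le_def.mp h11).2).symm
  have hdet' : 0 ≤ (M 0 0).re * (M 1 1).re - ((M 0 1).re ^ 2 + (M 0 1).im ^ 2) := by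
    have := (Complex.le_def.mp hdet).1
    simp [Complex.sub_re, Complex.mul_re, Complex.conj_re, Complex.conj_im,
      h00'.2, h11'.2] at this
    nlinarith [this]
  have hnorm : ‖vecOf M‖ = Real.sqrt (((M 0 1).re + (M 1 0).re)^2 +
      ((M 1 0).im - (M 0 1).im)^2 + ((M 0 0).re - (M 1 1).re)^2) := by
    rw [EuclideanSpace.norm_eq]
    congr 1
    rw [Fin.sum_univ_three]
    simp [vecOf, sq_abs]
  rw [hnorm, h10]
  simp only [Complex.star_def, Complex.conj_re, Complex.conj_im]
  have key : ((M 0 1).re + (M 0 1).re)^2 + (-(M 0 1).im - (M 0 1).im)^2 +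
      ((M 0 0).re - (M 1 1).re)^2 ≤ ((M 0 0).re + (M 1 1).re)^2 := by
    nlinarith [hdet', h00'.1, h11'.1]
  calc Real.sqrt _ ≤ Real.sqrt (((M 0 0).re + (M 1 1).re)^2) := Real.sqrt_le_sqrt key
    _ = (M 0 0).re + (M 1 1).re := Real.sqrt_sq (by linarith [h00'.1, h11'.1])
    _ = trOf M := rfl

lemma vecOf_one : vecOf (1 : Matrix (Fin 2) (Fin 2) ℂ) = 0 := by
  ext i
  fin_cases i <;> simp [vecOf, Matrix.one_apply]

lemma trOf_one : trOf (1 : Matrix (Fin 2) (Fin 2) ℂ) = 2 := by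
  simp [trOf, Matrix.one_apply]; norm_num

lemma sqrt_add_le' (x y : ℝ) (hx : 0 ≤ x) (hy : 0 ≤ y) :
    Real.sqrt (x + y) ≤ Real.sqrt x + Real.sqrt y := by
  have h1 : x + y ≤ (Real.sqrt x + Real.sqrt y) ^ 2 := by
    have := Real.sq_sqrt hx
    have := Real.sq_sqrt hy
    nlinarith [Real.sqrt_nonneg x, Real.sqrt_nonneg y]
  calc Real.sqrt (x + y) ≤ Real.sqrt ((Real.sqrt x + Real.sqrt y) ^ 2) := Real.sqrt_le_sqrt h1
    _ = Real.sqrt x + Real.sqrt y :=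
      Real.sqrt_sq (by positivity)

set_option maxHeartbeats 1000000 in
lemma analytic_part (a b c d : EuclideanSpace ℝ (Fin 3))
    (ha : ‖a‖ = 1) (hb : ‖b‖ = 1) (hcd : ‖c + d‖ + ‖c - d‖ ≤ 2) :
    (1 / Real.sqrt 2) * (‖a - b‖ + ‖a + b‖ - 2) ≤
      Real.sqrt (1 - ‖c‖ ^ 2 + ‖a - c‖ ^ 2) +
      Real.sqrt (1 - ‖d‖ ^ 2 + ‖b - d‖ ^ 2) := by
  have hac : ‖a - c‖ ^ 2 = ‖a‖ ^ 2 - 2 * (inner ℝ a c : ℝ) + ‖c‖ ^ 2 := norm_sub_sq_real a c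
  have hbd : ‖b - d‖ ^ 2 = ‖b‖ ^ 2 - 2 * (inner ℝ b d : ℝ) + ‖d‖ ^ 2 := norm_sub_sq_real b d
  have e1 : 1 - ‖c‖ ^ 2 + ‖a - c‖ ^ 2 = 2 - 2 * (inner ℝ a c : ℝ) := by rw [hac, ha]; ring
  have e2 : 1 - ‖d‖ ^ 2 + ‖b - d‖ ^ 2 = 2 - 2 * (inner ℝ b d : ℝ) := by rw [hbd, hb]; ring
  rw [e1, e2]
  set s := ‖a + b‖ with hs
  set t := ‖a - b‖ with ht
  have hs0 : 0 ≤ s := norm_nonneg _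
  have ht0 : 0 ≤ t := norm_nonneg _
  have hs2 : s ≤ 2 := by
    calc s ≤ ‖a‖ + ‖b‖ := norm_add_le a b
    _ = 2 := by rw [ha, hb]; norm_num
  have ht2 : t ≤ 2 := by
    calc t ≤ ‖a‖ + ‖b‖ := norm_sub_le a b
    _ = 2 := by rw [ha, hb]; norm_num
  have h4 : s ^ 2 + t ^ 2 = 4 := by
    have h1 : s ^ 2 = ‖a‖ ^ 2 + 2 * (inner ℝ a b : ℝ) + ‖b‖ ^ 2 := norm_add_sq_real a b
    have h2 : t ^ 2 = ‖a‖ ^ 2 - 2 * (inner ℝ a b : ℝ) + ‖b‖ ^ 2 := norm_sub_sq_real a b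
    rw [h1, h2, ha, hb]; ring
  -- norm of c, d ≤ 1
  have hc1 : ‖c‖ ≤ 1 := by
    have : 2 * ‖c‖ = ‖(c + d) + (c - d)‖ := by
      rw [show (c + d) + (c - d) = (2:ℝ) • c by module]
      rw [norm_smul]; simp [Real.norm_ofNat]
    have h2 := norm_add_le (c + d) (c - d)
    linarith [this ▸ h2]
  have hd1 : ‖d‖ ≤ 1 := by
    have : 2 * ‖d‖ = ‖(c + d) - (c - d)‖ := by
      rw [show (c + d) - (c - d) = (2:ℝ) • d by module]
      rw [norm_smul]; simp [Real.norm_ofNat]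
    have h2 := norm_sub_le (c + d) (c - d)
    linarith [this ▸ h2]
  have hiac : (inner ℝ a c : ℝ) ≤ 1 := by
    calc (inner ℝ a c : ℝ) ≤ ‖a‖ * ‖c‖ := real_inner_le_norm a c
    _ ≤ 1 := by rw [ha]; linarith
  have hibd : (inner ℝ b d : ℝ) ≤ 1 := by
    calc (inner ℝ b d : ℝ) ≤ ‖b‖ * ‖d‖ := real_inner_le_norm b d
    _ ≤ 1 := by rw [hb]; linarith
  set m := max s t with hm
  have hm0 : 0 ≤ m := le_trans hs0 (le_max_left s t)
  have hm2 : m ≤ 2 := max_le hs2 ht2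
  -- key inner product bound
  have hip : 2 * (inner ℝ a c : ℝ) + 2 * (inner ℝ b d : ℝ) =
      inner ℝ (a + b) (c + d) + inner ℝ (a - b) (c - d) := by
    simp only [inner_add_left, inner_add_right, inner_sub_left, inner_sub_right]
    ring
  have hb1 : (inner ℝ (a + b) (c + d) : ℝ) ≤ s * ‖c + d‖ := real_inner_le_norm _ _
  have hb2 : (inner ℝ (a - b) (c - d) : ℝ) ≤ t * ‖c - d‖ := real_inner_le_norm _ _
  have hbig : 2 * (inner ℝ a c : ℝ) + 2 * (inner ℝ b d : ℝ) ≤ 2 * m := by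
    rw [hip]
    have hp0 : 0 ≤ ‖c + d‖ := norm_nonneg _
    have hq0 : 0 ≤ ‖c - d‖ := norm_nonneg _
    have hms : s ≤ m := le_max_left s t
    have hmt : t ≤ m := le_max_right s t
    nlinarith [hb1, hb2]
  -- step 1: sum of sqrts ≥ sqrt of sum
  have step1 : Real.sqrt (4 - 2 * m) ≤
      Real.sqrt (2 - 2 * (inner ℝ a c : ℝ)) + Real.sqrt (2 - 2 * (inner ℝ b d : ℝ)) := by
    have hx : (0:ℝ) ≤ 2 - 2 * (inner ℝ a c : ℝ) := by linarith
    have hy : (0:ℝ) ≤ 2 - 2 * (inner ℝ b d : ℝ) := by linarith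
    calc Real.sqrt (4 - 2 * m)
        ≤ Real.sqrt ((2 - 2 * (inner ℝ a c : ℝ)) + (2 - 2 * (inner ℝ b d : ℝ))) :=
          Real.sqrt_le_sqrt (by linarith)
      _ ≤ _ := sqrt_add_le' _ _ hx hy
  -- step 2
  have step2 : (1 / Real.sqrt 2) * (t + s - 2) ≤ Real.sqrt (4 - 2 * m) := by
    rcases le_or_gt (t + s) 2 with h | h
    · have : (1 / Real.sqrt 2) * (t + s - 2) ≤ 0 := by
        apply mul_nonpos_of_nonneg_of_nonpos
        · positivity
        · linarith
      linarith [Real.sqrt_nonneg (4 - 2 * m)]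
    · apply Real.le_sqrt_of_sq_le
      have h2 : (Real.sqrt 2) ^ 2 = 2 := Real.sq_sqrt (by norm_num)
      have hexp : ((1 / Real.sqrt 2) * (t + s - 2)) ^ 2 = (t + s - 2) ^ 2 / 2 := by
        rw [mul_pow, div_pow, one_pow, h2]
        ring
      rw [hexp]
      rcases max_cases s t with ⟨hm1, hm2'⟩ | ⟨hm1, hm2'⟩ <;> rw [hm, hm1] <;>
        nlinarith [mul_nonneg ht0 (by linarith : (0:ℝ) ≤ 2 - s),
          mul_nonneg hs0 (by linarith : (0:ℝ) ≤ 2 - t)]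
  calc (1 / Real.sqrt 2) * (t + s - 2) ≤ Real.sqrt (4 - 2 * m) := step2
    _ ≤ _ := step1

/-- Additive Heisenberg-type trade-off for noise-operator based errors of a joint
approximate measurement of two ±1-valued qubit observables with covariant
approximators M₁(+1)=½(1+c·σ), M₂(+1)=½(1+d·σ):
ε_NO(A) + ε_NO(B) ≥ (1/√2)(‖a−b‖+‖a+b‖−2). -/
theorem qubit_noise_operator_error_tradeoff (a b : EuclideanSpace ℝ (Fin 3))
    (ha : ‖a‖ = 1) (hb : ‖b‖ = 1)
    (G : Fin 2 → Fin 2 → Matrix (Fin 2) (Fin 2) ℂ)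
    (hGpos : ∀ s t, (G s t).PosSemidef) (hGsum : ∑ s, ∑ t, G s t = 1)
    (c d : EuclideanSpace ℝ (Fin 3))
    (hM₁ : ∑ t, G 0 t = (1 / 2 : ℂ) • (1 + dotσ c))
    (hM₂ : ∑ s, G s 0 = (1 / 2 : ℂ) • (1 + dotσ d)) :
    (1 / Real.sqrt 2) * (‖a - b‖ + ‖a + b‖ - 2) ≤
      Real.sqrt (1 - ‖c‖ ^ 2 + ‖a - c‖ ^ 2) +
      Real.sqrt (1 - ‖d‖ ^ 2 + ‖b - d‖ ^ 2) := by
  apply analytic_part a b c d ha hb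
  -- derive the joint-measurability constraint ‖c+d‖ + ‖c−d‖ ≤ 2
  have hsum : G 0 0 + G 0 1 + (G 1 0 + G 1 1) = 1 := by
    simpa [Fin.sum_univ_two] using hGsum
  have hM₁' : G 0 0 + G 0 1 = (1 / 2 : ℂ) • (1 + dotσ c) := by
    simpa [Fin.sum_univ_two] using hM₁
  have hM₂' : G 0 0 + G 1 0 = (1 / 2 : ℂ) • (1 + dotσ d) := by
    simpa [Fin.sum_univ_two] using hM₂
  set v00 := vecOf (G 0 0)
  set v01 := vecOf (G 0 1)
  set v10 := vecOf (G 1 0)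
  set v11 := vecOf (G 1 1)
  have hc : v00 + v01 = c := by
    rw [← vecOf_add, hM₁', vecOf_covariant]
  have hd : v00 + v10 = d := by
    rw [← vecOf_add, hM₂', vecOf_covariant]
  have hzero : v00 + v01 + (v10 + v11) = 0 := by
    rw [← vecOf_add, ← vecOf_add, ← vecOf_add, hsum, vecOf_one]
  have h11 : v11 = -(v00 + v01 + v10) := by
    rw [eq_neg_iff_add_eq_zero, ← hzero]; abel
  have h1 : c + d = v00 - v11 := by
    rw [← hc, ← hd, h11]; abel
  have h2 : c - d = v01 - v10 := by
    rw [← hc, ← hd]; abel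
  have htr : trOf (G 0 0) + trOf (G 0 1) + (trOf (G 1 0) + trOf (G 1 1)) = 2 := by
    rw [← trOf_add, ← trOf_add, ← trOf_add, hsum, trOf_one]
  have b00 := norm_vecOf_le _ (hGpos 0 0)
  have b01 := norm_vecOf_le _ (hGpos 0 1)
  have b10 := norm_vecOf_le _ (hGpos 1 0)
  have b11 := norm_vecOf_le _ (hGpos 1 1)
  have n1 : ‖c + d‖ ≤ trOf (G 0 0) + trOf (G 1 1) := by
    rw [h1]
    calc ‖v00 - v11‖ ≤ ‖v00‖ + ‖v11‖ := norm_sub_le _ _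
    _ ≤ _ := add_le_add b00 b11
  have n2 : ‖c - d‖ ≤ trOf (G 0 1) + trOf (G 1 0) := by
    rw [h2]
    calc ‖v01 - v10‖ ≤ ‖v01‖ + ‖v10‖ := norm_sub_le _ _
    _ ≤ _ := add_le_add b01 b10
  linarith
end

section
/- Let a ∈ ℝ³ be a unit vector, r ∈ ℝ³ with ‖r‖ ≤ 1, and let ρ = ½(1 + r·σ). Let c₀ ∈ ℝ and c ∈ ℝ³ satisfy ‖c‖ ≤ min(c₀, 2 − c₀), and set A₊ = ½(1 + a·σ), A₋ = 1 − A₊, C₊ = ½(c₀·1 + c·σ), C₋ = 1 − C₊. Let μ be the probability measure on ℝ assigning mass Tr(ρ A₊) to +1 and Tr(ρ A₋) to −1, and ν the probability measure assigning Tr(ρ C₊) to +1 and Tr(ρ C₋) to −1. Then the infimum over all couplings γ of μ and ν of ∫ (x − y)² dγ equals 2 |1 − c₀ + r·(a − c)|. -/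
open Matrix MeasureTheory
open scoped ComplexOrder RealInnerProductSpace


open scoped ENNReal

noncomputable def mTwo (t : ℝ) : Measure ℝ :=
  ENNReal.ofReal t • Measure.dirac 1 + ENNReal.ofReal (1 - t) • Measure.dirac (-1)

lemma integrable_sq_dirac (a : ℝ × ℝ) (c : ℝ) :
    Integrable (fun x : ℝ × ℝ => (x.1 - x.2) ^ 2) (ENNReal.ofReal c • Measure.dirac a) :=
  ((integrable_const ((a.1 - a.2)^2)).congr
      (ae_eq_dirac (fun x : ℝ × ℝ => (x.1 - x.2) ^ 2)).symm).smul_measure ENNReal.ofReal_ne_top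

lemma coupling_exists {p q : ℝ} (hq0 : 0 ≤ q) (hqp : q ≤ p) (hp1 : p ≤ 1) :
    ∃ γ : Measure (ℝ × ℝ), IsProbabilityMeasure γ ∧ γ.map Prod.fst = mTwo p ∧
      γ.map Prod.snd = mTwo q ∧ ∫ x : ℝ × ℝ, (x.1 - x.2) ^ 2 ∂γ = 4 * (p - q) := by
  refine ⟨ENNReal.ofReal q • Measure.dirac ((1:ℝ), (1:ℝ)) +
      ENNReal.ofReal (p - q) • Measure.dirac ((1:ℝ), (-1:ℝ)) +
      ENNReal.ofReal (1 - p) • Measure.dirac ((-1:ℝ), (-1:ℝ)), ?_, ?_, ?_, ?_⟩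
  · constructor
    simp only [Measure.add_apply, Measure.smul_apply, measure_univ, smul_eq_mul, mul_one]
    rw [← ENNReal.ofReal_add hq0 (by linarith), ← ENNReal.ofReal_add (by linarith) (by linarith)]
    norm_num
  · rw [Measure.map_add _ _ measurable_fst, Measure.map_add _ _ measurable_fst,
      Measure.map_smul, Measure.map_smul, Measure.map_smul,
      Measure.map_dirac' measurable_fst, Measure.map_dirac' measurable_fst,
      Measure.map_dirac' measurable_fst]
    simp only [mTwo]
    rw [← add_smul, ← ENNReal.ofReal_add hq0 (by linarith)]
    norm_num
  · rw [Measure.map_add _ _ measurable_snd, Measure.map_add _ _ measurable_snd,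
      Measure.map_smul, Measure.map_smul, Measure.map_smul,
      Measure.map_dirac' measurable_snd, Measure.map_dirac' measurable_snd,
      Measure.map_dirac' measurable_snd]
    simp only [mTwo, add_assoc]
    rw [← add_smul, ← ENNReal.ofReal_add (by linarith) (by linarith)]
    norm_num
  · rw [integral_add_measure (by exact (integrable_sq_dirac _ _).add_measure (integrable_sq_dirac _ _))
      (integrable_sq_dirac _ _),
      integral_add_measure (integrable_sq_dirac _ _) (integrable_sq_dirac _ _)]
    simp only [integral_smul_measure, integral_dirac, ENNReal.toReal_ofReal hq0,
      ENNReal.toReal_ofReal (by linarith : (0:ℝ) ≤ p - q),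
      ENNReal.toReal_ofReal (by linarith : (0:ℝ) ≤ 1 - p)]
    norm_num
    ring

lemma mTwo_one {t : ℝ} (ht : 0 ≤ t) : mTwo t {1} = ENNReal.ofReal t := by
  simp only [mTwo, Measure.add_apply, Measure.smul_apply, Measure.dirac_apply,
    Set.indicator_apply, Set.mem_singleton_iff, smul_eq_mul]
  norm_num

lemma mTwo_compl {t : ℝ} : mTwo t ({1, -1} : Set ℝ)ᶜ = 0 := by
  simp [mTwo, Measure.dirac_apply, Set.indicator_apply]

lemma coupling_lb {p q : ℝ} (hp0 : 0 ≤ p) (hq0 : 0 ≤ q)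
    (γ : Measure (ℝ × ℝ)) (hγ : IsProbabilityMeasure γ)
    (h1 : γ.map Prod.fst = mTwo p) (h2 : γ.map Prod.snd = mTwo q) :
    4 * (p - q) ≤ ∫ x : ℝ × ℝ, (x.1 - x.2) ^ 2 ∂γ := by
  have hms : MeasurableSet (({1, -1} : Set ℝ)ᶜ) :=
    ((measurableSet_singleton (-1:ℝ)).insert 1).compl
  have hbad1 : γ (Prod.fst ⁻¹' ({1, -1} : Set ℝ)ᶜ) = 0 := by
    rw [← Measure.map_apply measurable_fst hms, h1, mTwo_compl]
  have hbad2 : γ (Prod.snd ⁻¹' ({1, -1} : Set ℝ)ᶜ) = 0 := by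
    rw [← Measure.map_apply measurable_snd hms, h2, mTwo_compl]
  have hae1 : ∀ᵐ x ∂γ, x.1 ∈ ({1, -1} : Set ℝ) := by
    rw [ae_iff]; exact hbad1
  have hae2 : ∀ᵐ x ∂γ, x.2 ∈ ({1, -1} : Set ℝ) := by
    rw [ae_iff]; exact hbad2
  have hg : Integrable (fun x : ℝ × ℝ => (x.1 - x.2) ^ 2) γ := by
    refine ⟨((continuous_fst.sub continuous_snd).pow 2).aestronglyMeasurable, ?_⟩
    apply MeasureTheory.HasFiniteIntegral.of_bounded (C := 4)
    filter_upwards [hae1, hae2] with x hx1 hx2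
    rcases hx1 with hx1 | hx1 <;> rcases hx2 with hx2 | hx2 <;>
      simp only [Set.mem_singleton_iff, Set.mem_insert_iff] at * <;> rw [hx1, hx2] <;> norm_num
  have hsub : (Prod.fst ⁻¹' ({1} : Set ℝ)) ⊆
      ({((1:ℝ), (-1:ℝ))} ∪ Prod.snd ⁻¹' ({1} : Set ℝ)) ∪ Prod.snd ⁻¹' ({1, -1} : Set ℝ)ᶜ := by
    rintro ⟨x, y⟩ hx
    simp only [Set.mem_preimage, Set.mem_singleton_iff] at hx
    subst hx
    by_cases hy1 : y = 1
    · exact Or.inl (Or.inr (by simp [hy1]))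
    by_cases hy2 : y = -1
    · exact Or.inl (Or.inl (by simp [hy2]))
    · exact Or.inr (by simp [hy1, hy2])
  have hm : ENNReal.ofReal p ≤ γ {((1:ℝ), (-1:ℝ))} + ENNReal.ofReal q := by
    calc ENNReal.ofReal p = γ (Prod.fst ⁻¹' ({1} : Set ℝ)) := by
          rw [← Measure.map_apply measurable_fst (measurableSet_singleton _), h1, mTwo_one hp0]
      _ ≤ γ (({((1:ℝ), (-1:ℝ))} ∪ Prod.snd ⁻¹' ({1} : Set ℝ)) ∪ Prod.snd ⁻¹' ({1, -1} : Set ℝ)ᶜ) :=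
          measure_mono hsub
      _ ≤ γ ({((1:ℝ), (-1:ℝ))} ∪ Prod.snd ⁻¹' ({1} : Set ℝ)) + γ (Prod.snd ⁻¹' ({1, -1} : Set ℝ)ᶜ) :=
          measure_union_le _ _
      _ = γ ({((1:ℝ), (-1:ℝ))} ∪ Prod.snd ⁻¹' ({1} : Set ℝ)) := by rw [hbad2, add_zero]
      _ ≤ γ {((1:ℝ), (-1:ℝ))} + γ (Prod.snd ⁻¹' ({1} : Set ℝ)) := measure_union_le _ _
      _ = γ {((1:ℝ), (-1:ℝ))} + ENNReal.ofReal q := by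
          rw [← Measure.map_apply measurable_snd (measurableSet_singleton _), h2, mTwo_one hq0]
  have hfin : γ {((1:ℝ), (-1:ℝ))} ≠ ⊤ := measure_ne_top γ _
  have key : p - q ≤ (γ {((1:ℝ), (-1:ℝ))}).toReal := by
    have := ENNReal.toReal_mono (by finiteness) hm
    rw [ENNReal.toReal_add hfin ENNReal.ofReal_ne_top, ENNReal.toReal_ofReal hp0,
      ENNReal.toReal_ofReal hq0] at this
    linarith
  have hind : ∫ x, Set.indicator {((1:ℝ), (-1:ℝ))} (fun _ => (4:ℝ)) x ∂γ =
      (γ {((1:ℝ), (-1:ℝ))}).toReal * 4 := by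
    rw [integral_indicator_const _ (measurableSet_singleton _)]
    simp [smul_eq_mul]
    rfl
  calc 4 * (p - q) ≤ (γ {((1:ℝ), (-1:ℝ))}).toReal * 4 := by linarith
    _ = ∫ x, Set.indicator {((1:ℝ), (-1:ℝ))} (fun _ => (4:ℝ)) x ∂γ := hind.symm
    _ ≤ ∫ x : ℝ × ℝ, (x.1 - x.2) ^ 2 ∂γ := by
        refine integral_mono_of_nonneg (Filter.Eventually.of_forall fun x => ?_) hg
          (Filter.Eventually.of_forall fun x => ?_)
        · exact Set.indicator_nonneg (fun _ _ => by norm_num) x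
        · by_cases hx : x = ((1:ℝ), (-1:ℝ))
          · subst hx; norm_num
          · rw [Set.indicator_of_notMem (by simpa using hx)]; positivity

lemma integral_sq_swap (γ : Measure (ℝ × ℝ)) :
    ∫ x : ℝ × ℝ, (x.1 - x.2) ^ 2 ∂(γ.map Prod.swap) = ∫ x : ℝ × ℝ, (x.1 - x.2) ^ 2 ∂γ := by
  rw [integral_map (f := fun x : ℝ × ℝ => (x.1 - x.2) ^ 2) measurable_swap.aemeasurable
    ((continuous_fst.sub continuous_snd).pow 2).aestronglyMeasurable]
  exact integral_congr_ae (Filter.Eventually.of_forall fun x => by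
    simp only [Prod.fst_swap, Prod.snd_swap]; ring)

lemma coupling_exists_abs {p q : ℝ} (hp0 : 0 ≤ p) (hp1 : p ≤ 1) (hq0 : 0 ≤ q) (hq1 : q ≤ 1) :
    ∃ γ : Measure (ℝ × ℝ), IsProbabilityMeasure γ ∧ γ.map Prod.fst = mTwo p ∧
      γ.map Prod.snd = mTwo q ∧ ∫ x : ℝ × ℝ, (x.1 - x.2) ^ 2 ∂γ = 4 * |p - q| := by
  rcases le_total q p with h | h
  · obtain ⟨γ, h1, h2, h3, h4⟩ := coupling_exists hq0 h hp1
    exact ⟨γ, h1, h2, h3, by rw [h4, abs_of_nonneg (by linarith)]⟩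
  · obtain ⟨γ, h1, h2, h3, h4⟩ := coupling_exists hp0 h hq1
    refine ⟨γ.map Prod.swap, Measure.isProbabilityMeasure_map measurable_swap.aemeasurable, ?_, ?_, ?_⟩
    · rw [Measure.map_map measurable_fst measurable_swap, show (Prod.fst ∘ Prod.swap : ℝ × ℝ → ℝ) = Prod.snd from rfl]; exact h3
    · rw [Measure.map_map measurable_snd measurable_swap, show (Prod.snd ∘ Prod.swap : ℝ × ℝ → ℝ) = Prod.fst from rfl]; exact h2
    · rw [integral_sq_swap, h4, abs_of_nonpos (by linarith)]; ring

lemma coupling_lb_abs {p q : ℝ} (hp0 : 0 ≤ p) (hq0 : 0 ≤ q)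
    (γ : Measure (ℝ × ℝ)) (hγ : IsProbabilityMeasure γ)
    (h1 : γ.map Prod.fst = mTwo p) (h2 : γ.map Prod.snd = mTwo q) :
    4 * |p - q| ≤ ∫ x : ℝ × ℝ, (x.1 - x.2) ^ 2 ∂γ := by
  rcases abs_cases (p - q) with ⟨h, _⟩ | ⟨h, _⟩
  · rw [h]; exact coupling_lb hp0 hq0 γ hγ h1 h2
  · rw [h]
    have hswap := coupling_lb hq0 hp0 (γ.map Prod.swap)
      (Measure.isProbabilityMeasure_map measurable_swap.aemeasurable)
      (by rw [Measure.map_map measurable_fst measurable_swap, show (Prod.fst ∘ Prod.swap : ℝ × ℝ → ℝ) = Prod.snd from rfl]; exact h2)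
      (by rw [Measure.map_map measurable_snd measurable_swap, show (Prod.snd ∘ Prod.swap : ℝ × ℝ → ℝ) = Prod.fst from rfl]; exact h1)
    rw [integral_sq_swap] at hswap
    linarith

lemma sInf_couplings {p q : ℝ} (hp0 : 0 ≤ p) (hp1 : p ≤ 1) (hq0 : 0 ≤ q) (hq1 : q ≤ 1) :
    sInf {z : ℝ | ∃ γ : Measure (ℝ × ℝ), IsProbabilityMeasure γ ∧
        γ.map Prod.fst = mTwo p ∧ γ.map Prod.snd = mTwo q ∧
        z = ∫ x : ℝ × ℝ, (x.1 - x.2) ^ 2 ∂γ} = 4 * |p - q| := by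
  obtain ⟨γ₀, hγ₀, hf, hs, hint⟩ := coupling_exists_abs hp0 hp1 hq0 hq1
  have hmem : 4 * |p - q| ∈ {z : ℝ | ∃ γ : Measure (ℝ × ℝ), IsProbabilityMeasure γ ∧
      γ.map Prod.fst = mTwo p ∧ γ.map Prod.snd = mTwo q ∧
      z = ∫ x : ℝ × ℝ, (x.1 - x.2) ^ 2 ∂γ} := ⟨γ₀, hγ₀, hf, hs, hint.symm⟩
  apply le_antisymm
  · refine csInf_le ⟨0, ?_⟩ hmem
    rintro z ⟨γ, hγ, h1, h2, rfl⟩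
    exact integral_nonneg fun x => sq_nonneg _
  · refine le_csInf ⟨_, hmem⟩ ?_
    rintro z ⟨γ, hγ, h1, h2, rfl⟩
    exact coupling_lb_abs hp0 hq0 γ hγ h1 h2

/-- The squared Wasserstein 2-deviation between the outcome distributions of the
sharp ±1-valued qubit observable A = a·σ and of the ±1-valued approximator C with
C₊ = ½(c₀1+c·σ), in the state ρ = ½(1+r·σ), equals 2|1 − c₀ + r·(a − c)|. -/
theorem qubit_wasserstein_deviation (a r : EuclideanSpace ℝ (Fin 3))
    (ha : ‖a‖ = 1) (hr : ‖r‖ ≤ 1)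
    (c₀ : ℝ) (c : EuclideanSpace ℝ (Fin 3)) (hc : ‖c‖ ≤ min c₀ (2 - c₀)) :
    let ρ : Matrix (Fin 2) (Fin 2) ℂ := (1 / 2 : ℂ) • (1 + dotσ r)
    let Ap : Matrix (Fin 2) (Fin 2) ℂ := (1 / 2 : ℂ) • (1 + dotσ a)
    let Am : Matrix (Fin 2) (Fin 2) ℂ := 1 - Ap
    let Cp : Matrix (Fin 2) (Fin 2) ℂ := (1 / 2 : ℂ) • (((c₀ : ℝ) : ℂ) • 1 + dotσ c)
    let Cm : Matrix (Fin 2) (Fin 2) ℂ := 1 - Cp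
    let μ : Measure ℝ := ENNReal.ofReal ((ρ * Ap).trace.re) • Measure.dirac 1 +
      ENNReal.ofReal ((ρ * Am).trace.re) • Measure.dirac (-1)
    let ν : Measure ℝ := ENNReal.ofReal ((ρ * Cp).trace.re) • Measure.dirac 1 +
      ENNReal.ofReal ((ρ * Cm).trace.re) • Measure.dirac (-1)
    sInf {z : ℝ | ∃ γ : Measure (ℝ × ℝ), IsProbabilityMeasure γ ∧
        γ.map Prod.fst = μ ∧ γ.map Prod.snd = ν ∧
        z = ∫ p : ℝ × ℝ, (p.1 - p.2) ^ 2 ∂γ} =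
      2 * |1 - c₀ + ⟪r, a - c⟫| := by
  intro ρ Ap Am Cp Cm μ ν
  have hA : ((1/2:ℂ) • (1 + dotσ r) * ((1/2:ℂ) • (1 + dotσ a))).trace.re
      = (1 + ⟪r, a⟫) / 2 := by
    simp [dotσ, σ₁, σ₂, σ₃, Matrix.trace_fin_two, Matrix.mul_apply, Fin.sum_univ_two,
      Matrix.smul_apply, Matrix.add_apply, Matrix.one_apply, PiLp.inner_apply,
      Fin.sum_univ_three, Complex.add_re, Complex.mul_re, Complex.ofReal_re, Complex.ofReal_im]
    ring
  have hA' : ((1/2:ℂ) • (1 + dotσ r) * (1 - (1/2:ℂ) • (1 + dotσ a))).trace.re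
      = 1 - (1 + ⟪r, a⟫) / 2 := by
    simp [dotσ, σ₁, σ₂, σ₃, Matrix.trace_fin_two, Matrix.mul_apply, Fin.sum_univ_two,
      Matrix.smul_apply, Matrix.add_apply, Matrix.sub_apply, Matrix.one_apply, PiLp.inner_apply,
      Fin.sum_univ_three, Complex.add_re, Complex.sub_re, Complex.mul_re, Complex.ofReal_re,
      Complex.ofReal_im]
    ring
  have hC : ((1/2:ℂ) • (1 + dotσ r) * ((1/2:ℂ) • (((c₀:ℝ):ℂ) • 1 + dotσ c))).trace.re
      = (c₀ + ⟪r, c⟫) / 2 := by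
    simp [dotσ, σ₁, σ₂, σ₃, Matrix.trace_fin_two, Matrix.mul_apply, Fin.sum_univ_two,
      Matrix.smul_apply, Matrix.add_apply, Matrix.one_apply, PiLp.inner_apply,
      Fin.sum_univ_three, Complex.add_re, Complex.mul_re, Complex.ofReal_re, Complex.ofReal_im]
    ring
  have hC' : ((1/2:ℂ) • (1 + dotσ r) * (1 - (1/2:ℂ) • (((c₀:ℝ):ℂ) • 1 + dotσ c))).trace.re
      = 1 - (c₀ + ⟪r, c⟫) / 2 := by
    simp [dotσ, σ₁, σ₂, σ₃, Matrix.trace_fin_two, Matrix.mul_apply, Fin.sum_univ_two,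
      Matrix.smul_apply, Matrix.add_apply, Matrix.sub_apply, Matrix.one_apply, PiLp.inner_apply,
      Fin.sum_univ_three, Complex.add_re, Complex.sub_re, Complex.mul_re, Complex.ofReal_re,
      Complex.ofReal_im]
    ring
  have hμ : μ = mTwo ((1 + ⟪r, a⟫) / 2) := by
    simp only [μ, ρ, Ap, Am, mTwo, hA, hA']
  have hν : ν = mTwo ((c₀ + ⟪r, c⟫) / 2) := by
    simp only [ν, ρ, Cp, Cm, mTwo, hC, hC']
  have hra : |⟪r, a⟫| ≤ 1 := by
    have := abs_real_inner_le_norm r a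
    rw [ha, mul_one] at this
    linarith
  have hrc : |⟪r, c⟫| ≤ ‖c‖ := by
    have h1 := abs_real_inner_le_norm r c
    nlinarith [norm_nonneg c]
  have hc1 : ‖c‖ ≤ c₀ := hc.trans (min_le_left _ _)
  have hc2 : ‖c‖ ≤ 2 - c₀ := hc.trans (min_le_right _ _)
  have hra' := abs_le.mp hra
  have hrc' := abs_le.mp hrc
  rw [hμ, hν, sInf_couplings (by linarith [hra'.1]) (by linarith [hra'.2])
    (by linarith [hrc'.1]) (by linarith [hrc'.2]), inner_sub_right]
  rw [show (1 + ⟪r, a⟫) / 2 - (c₀ + ⟪r, c⟫) / 2 = (1 - c₀ + (⟪r, a⟫ - ⟪r, c⟫)) / 2 from by ring,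
    abs_div]
  norm_num
  ring
end

section
/- Let a, c ∈ ℝ³ with ‖a‖ = 1 and ‖c‖ ≤ 1. Set A = a·σ, C₊ = ½(1 + c·σ), C₋ = 1 − C₊, C[x] = C₊ − C₋ and C[x²] = C₊ + C₋ = 1. Then: (i) for every density matrix ρ on ℂ², Tr(ρ (C[x²] − C[x]²)) + Tr(ρ (C[x] − A)²) = 1 − ‖c‖² + ‖a − c‖² (in particular this quantity is state-independent); and (ii) 1 − ‖c‖² + ‖a − c‖² ≤ 2‖a − c‖. -/
open Matrix
open scoped ComplexOrder

lemma norm_sq_eq (v : EuclideanSpace ℝ (Fin 3)) :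
    (‖v‖ ^ 2 : ℝ) = v 0 ^ 2 + v 1 ^ 2 + v 2 ^ 2 := by
  rw [EuclideanSpace.norm_eq, Real.sq_sqrt (by positivity)]
  simp [Fin.sum_univ_three, sq_abs]

lemma dotσ_sq (v : EuclideanSpace ℝ (Fin 3)) :
    dotσ v * dotσ v = ((‖v‖ ^ 2 : ℝ) : ℂ) • 1 := by
  have hn := norm_sq_eq v
  ext i j
  fin_cases i <;> fin_cases j <;>
    simp [dotσ, σ₁, σ₂, σ₃, Matrix.mul_apply, Fin.sum_univ_two, Matrix.one_apply, hn] <;>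
    push_cast <;> ring_nf <;> simp [Complex.I_sq] <;> ring

lemma dotσ_sub (v w : EuclideanSpace ℝ (Fin 3)) :
    dotσ v - dotσ w = dotσ (v - w) := by
  simp only [dotσ, PiLp.sub_apply]
  push_cast
  module

/-- For a covariant ±1-valued qubit approximator C (with C₊ = ½(1+c·σ)) of the
sharp observable A = a·σ: (i) the squared noise-operator error
Tr(ρ(C[x²]−C[x]²)) + Tr(ρ(C[x]−A)²) equals 1 − ‖c‖² + ‖a−c‖² in every state ρ
(state-independence), and (ii) this quantity is at most 2‖a−c‖ = Δ(A,C)². -/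
theorem qubit_covariant_noise_error (a c : EuclideanSpace ℝ (Fin 3))
    (ha : ‖a‖ = 1) (hc : ‖c‖ ≤ 1) :
    let A : Matrix (Fin 2) (Fin 2) ℂ := dotσ a
    let Cp : Matrix (Fin 2) (Fin 2) ℂ := (1 / 2 : ℂ) • (1 + dotσ c)
    let Cm : Matrix (Fin 2) (Fin 2) ℂ := 1 - Cp
    let Cx : Matrix (Fin 2) (Fin 2) ℂ := Cp - Cm
    (∀ ρ : Matrix (Fin 2) (Fin 2) ℂ, ρ.PosSemidef → ρ.trace = 1 →
      (ρ * ((Cp + Cm) - Cx ^ 2)).trace + (ρ * (Cx - A) ^ 2).trace =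
        ((1 - ‖c‖ ^ 2 + ‖a - c‖ ^ 2 : ℝ) : ℂ)) ∧
    1 - ‖c‖ ^ 2 + ‖a - c‖ ^ 2 ≤ 2 * ‖a - c‖ := by
  intro A Cp Cm Cx
  have hCx : Cx = dotσ c := by
    show (1 / 2 : ℂ) • (1 + dotσ c) - (1 - (1 / 2 : ℂ) • (1 + dotσ c)) = dotσ c
    module
  have hsum : Cp + Cm = 1 := by
    show (1 / 2 : ℂ) • (1 + dotσ c) + (1 - (1 / 2 : ℂ) • (1 + dotσ c)) = 1
    module
  constructor
  · intro ρ hρ htr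
    have h1 : (Cp + Cm) - Cx ^ 2 = ((1 - ‖c‖ ^ 2 : ℝ) : ℂ) • 1 := by
      rw [hsum, hCx, sq, dotσ_sq]
      push_cast
      module
    have h2 : (Cx - A) ^ 2 = ((‖a - c‖ ^ 2 : ℝ) : ℂ) • 1 := by
      rw [hCx, sq, show dotσ c - A = dotσ (c - a) from dotσ_sub c a, dotσ_sq,
        norm_sub_rev]
    simp only [h1, h2, Matrix.mul_smul, mul_one, Matrix.trace_smul, htr, smul_eq_mul]
    push_cast
    ring
  · have h1 : ‖a - c‖ ≤ ‖a‖ + ‖c‖ := norm_sub_le a c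
    have h2 : ‖a‖ - ‖c‖ ≤ ‖a - c‖ := norm_sub_norm_le a c
    nlinarith [norm_nonneg (a - c), norm_nonneg c]
end

section
/- Let μ and ν be probability measures on ℝ with finite second moments, with means m(μ), m(ν) and standard deviations Δ(μ), Δ(ν). Then for every coupling γ of μ and ν: ∫ (x − y)² dγ(x,y) ≥ (Δ(μ) − Δ(ν))² + (m(μ) − m(ν))². -/
open MeasureTheory

/-- Lower Cauchy–Schwarz bound for the Wasserstein 2-deviation: for probability
measures μ, ν on ℝ with finite second moments and any coupling γ,
∫(x−y)²dγ ≥ (Δ(μ) − Δ(ν))² + (m(μ) − m(ν))². -/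
theorem coupling_squared_deviation_lower_bound
    (μ ν : Measure ℝ) [IsProbabilityMeasure μ] [IsProbabilityMeasure ν]
    (hμ : Integrable (fun x => x ^ 2) μ) (hν : Integrable (fun x => x ^ 2) ν)
    (γ : Measure (ℝ × ℝ)) [IsProbabilityMeasure γ]
    (hfst : γ.map Prod.fst = μ) (hsnd : γ.map Prod.snd = ν) :
    (Real.sqrt (∫ x, (x - ∫ x, x ∂μ) ^ 2 ∂μ) -
        Real.sqrt (∫ y, (y - ∫ y, y ∂ν) ^ 2 ∂ν)) ^ 2 +
      ((∫ x, x ∂μ) - ∫ y, y ∂ν) ^ 2 ≤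
    ∫ p : ℝ × ℝ, (p.1 - p.2) ^ 2 ∂γ := by
  set a := ∫ x, x ∂μ with ha
  set b := ∫ y, y ∂ν with hb
  have hmpf : MeasurePreserving (Prod.fst : ℝ × ℝ → ℝ) γ μ := ⟨measurable_fst, hfst⟩
  have hmps : MeasurePreserving (Prod.snd : ℝ × ℝ → ℝ) γ ν := ⟨measurable_snd, hsnd⟩
  have hμ2 : MemLp (fun x : ℝ => x) 2 μ :=
    (memLp_two_iff_integrable_sq aestronglyMeasurable_id).2 hμ
  have hν2 : MemLp (fun x : ℝ => x) 2 ν :=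
    (memLp_two_iff_integrable_sq aestronglyMeasurable_id).2 hν
  have hμa : MemLp (fun x : ℝ => x - a) 2 μ := hμ2.sub (memLp_const a)
  have hνb : MemLp (fun x : ℝ => x - b) 2 ν := hν2.sub (memLp_const b)
  have hU : MemLp (fun p : ℝ × ℝ => p.1 - a) 2 γ := hμa.comp_measurePreserving hmpf
  have hV : MemLp (fun p : ℝ × ℝ => p.2 - b) 2 γ := hνb.comp_measurePreserving hmps
  have hU2 : Integrable (fun p : ℝ × ℝ => (p.1 - a) ^ 2) γ := hU.integrable_sq
  have hV2 : Integrable (fun p : ℝ × ℝ => (p.2 - b) ^ 2) γ := hV.integrable_sq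
  have hU1 : Integrable (fun p : ℝ × ℝ => p.1 - a) γ := hU.integrable one_le_two
  have hV1 : Integrable (fun p : ℝ × ℝ => p.2 - b) γ := hV.integrable one_le_two
  have hUV : Integrable (fun p : ℝ × ℝ => (p.1 - a) * (p.2 - b)) γ := by
    refine Integrable.mono' ((hU2.add hV2).div_const 2)
      (hU.aestronglyMeasurable.mul hV.aestronglyMeasurable) ?_
    refine Filter.Eventually.of_forall fun p => ?_
    rw [Real.norm_eq_abs, abs_mul]
    simp only [Pi.add_apply]
    nlinarith [sq_nonneg (|p.1 - a| - |p.2 - b|), sq_abs (p.1 - a), sq_abs (p.2 - b),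
      abs_nonneg (p.1 - a), abs_nonneg (p.2 - b)]
  have hμ1 : Integrable (fun x : ℝ => x) μ := hμ2.integrable one_le_two
  have hν1 : Integrable (fun x : ℝ => x) ν := hν2.integrable one_le_two
  have hintf : ∀ f : ℝ → ℝ, AEStronglyMeasurable f μ →
      ∫ p : ℝ × ℝ, f p.1 ∂γ = ∫ x, f x ∂μ := by
    intro f hf
    rw [← hfst] at hf ⊢
    exact (integral_map measurable_fst.aemeasurable hf).symm
  have hints : ∀ f : ℝ → ℝ, AEStronglyMeasurable f ν →
      ∫ p : ℝ × ℝ, f p.2 ∂γ = ∫ y, f y ∂ν := by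
    intro f hf
    rw [← hsnd] at hf ⊢
    exact (integral_map measurable_snd.aemeasurable hf).symm
  have hIU : ∫ p : ℝ × ℝ, (p.1 - a) ∂γ = 0 := by
    rw [show (∫ p : ℝ × ℝ, (p.1 - a) ∂γ) = ∫ x, (x - a) ∂μ from
        hintf (fun x => x - a) ((measurable_id.sub measurable_const).aestronglyMeasurable),
      integral_sub hμ1 (integrable_const a), integral_const]
    simp [ha]
  have hIV : ∫ p : ℝ × ℝ, (p.2 - b) ∂γ = 0 := by
    rw [show (∫ p : ℝ × ℝ, (p.2 - b) ∂γ) = ∫ y, (y - b) ∂ν from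
        hints (fun y => y - b) ((measurable_id.sub measurable_const).aestronglyMeasurable),
      integral_sub hν1 (integrable_const b), integral_const]
    simp [hb]
  have hIU2 : ∫ p : ℝ × ℝ, (p.1 - a) ^ 2 ∂γ = ∫ x, (x - a) ^ 2 ∂μ :=
    hintf (fun x => (x - a) ^ 2)
      (((measurable_id.sub measurable_const).pow_const 2).aestronglyMeasurable)
  have hIV2 : ∫ p : ℝ × ℝ, (p.2 - b) ^ 2 ∂γ = ∫ y, (y - b) ^ 2 ∂ν :=
    hints (fun y => (y - b) ^ 2)
      (((measurable_id.sub measurable_const).pow_const 2).aestronglyMeasurable)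
  have hexp : ∫ p : ℝ × ℝ, (p.1 - p.2) ^ 2 ∂γ =
      (∫ x, (x - a) ^ 2 ∂μ) + (∫ y, (y - b) ^ 2 ∂ν)
        - 2 * (∫ p : ℝ × ℝ, (p.1 - a) * (p.2 - b) ∂γ) + (a - b) ^ 2 := by
    have e0 : ∫ p : ℝ × ℝ, (p.1 - p.2) ^ 2 ∂γ =
        ∫ p : ℝ × ℝ, ((p.1 - a) ^ 2 + (p.2 - b) ^ 2 - 2 * ((p.1 - a) * (p.2 - b))
          + 2 * (a - b) * (p.1 - a) - 2 * (a - b) * (p.2 - b) + (a - b) ^ 2) ∂γ :=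
      integral_congr_ae (Filter.Eventually.of_forall fun p => by ring)
    have i2 : Integrable (fun p : ℝ × ℝ => (p.1 - a) ^ 2 + (p.2 - b) ^ 2) γ := hU2.add hV2
    have i3 : Integrable (fun p : ℝ × ℝ =>
        (p.1 - a) ^ 2 + (p.2 - b) ^ 2 - 2 * ((p.1 - a) * (p.2 - b))) γ :=
      i2.sub (hUV.const_mul 2)
    have i4 : Integrable (fun p : ℝ × ℝ =>
        (p.1 - a) ^ 2 + (p.2 - b) ^ 2 - 2 * ((p.1 - a) * (p.2 - b))
          + 2 * (a - b) * (p.1 - a)) γ :=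
      i3.add (hU1.const_mul (2 * (a - b)))
    have i5 : Integrable (fun p : ℝ × ℝ =>
        (p.1 - a) ^ 2 + (p.2 - b) ^ 2 - 2 * ((p.1 - a) * (p.2 - b))
          + 2 * (a - b) * (p.1 - a) - 2 * (a - b) * (p.2 - b)) γ :=
      i4.sub (hV1.const_mul (2 * (a - b)))
    rw [e0, integral_add i5 (integrable_const _), integral_sub i4 (hV1.const_mul _),
      integral_add i3 (hU1.const_mul _), integral_sub i2 (hUV.const_mul 2),
      integral_add hU2 hV2, integral_const_mul, integral_const_mul, integral_const_mul,
      integral_const, hIU, hIV, hIU2, hIV2]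
    simp
  -- Cauchy–Schwarz
  have h2eq : (ENNReal.ofReal 2) = (2 : ENNReal) := by norm_num
  have hUabs : MemLp (fun p : ℝ × ℝ => |p.1 - a|) (ENNReal.ofReal 2) γ := by
    rw [h2eq]; simpa [Real.norm_eq_abs] using hU.norm
  have hVabs : MemLp (fun p : ℝ × ℝ => |p.2 - b|) (ENNReal.ofReal 2) γ := by
    rw [h2eq]; simpa [Real.norm_eq_abs] using hV.norm
  have hpq : (2 : ℝ).HolderConjugate 2 := Real.holderConjugate_iff.mpr ⟨one_lt_two, by norm_num⟩
  have hCS0 := integral_mul_le_Lp_mul_Lq_of_nonneg hpq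
    (Filter.Eventually.of_forall fun p : ℝ × ℝ => abs_nonneg (p.1 - a))
    (Filter.Eventually.of_forall fun p : ℝ × ℝ => abs_nonneg (p.2 - b)) hUabs hVabs
  have hrw : ∀ x : ℝ, |x| ^ (2 : ℝ) = x ^ 2 := fun x => by
    rw [show (2 : ℝ) = ((2 : ℕ) : ℝ) by norm_num, Real.rpow_natCast, sq_abs]
  simp only [hrw] at hCS0
  have hsq : ∀ y : ℝ, y ^ (1 / 2 : ℝ) = Real.sqrt y := fun y => (Real.sqrt_eq_rpow y).symm
  rw [hsq, hsq] at hCS0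
  have hCS : ∫ p : ℝ × ℝ, (p.1 - a) * (p.2 - b) ∂γ ≤
      Real.sqrt (∫ x, (x - a) ^ 2 ∂μ) * Real.sqrt (∫ y, (y - b) ^ 2 ∂ν) := by
    calc ∫ p : ℝ × ℝ, (p.1 - a) * (p.2 - b) ∂γ
        ≤ ∫ p : ℝ × ℝ, |p.1 - a| * |p.2 - b| ∂γ := by
          refine integral_mono hUV (by simpa [abs_mul] using hUV.abs) fun p => ?_
          rw [← abs_mul]; exact le_abs_self _
      _ ≤ Real.sqrt (∫ p : ℝ × ℝ, (p.1 - a) ^ 2 ∂γ) *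
            Real.sqrt (∫ p : ℝ × ℝ, (p.2 - b) ^ 2 ∂γ) := hCS0
      _ = _ := by rw [hIU2, hIV2]
  have hAnn : (0 : ℝ) ≤ Real.sqrt (∫ x, (x - a) ^ 2 ∂μ) := Real.sqrt_nonneg _
  have hBnn : (0 : ℝ) ≤ Real.sqrt (∫ y, (y - b) ^ 2 ∂ν) := Real.sqrt_nonneg _
  have hA2 : Real.sqrt (∫ x, (x - a) ^ 2 ∂μ) ^ 2 = ∫ x, (x - a) ^ 2 ∂μ :=
    Real.sq_sqrt (integral_nonneg fun x => sq_nonneg _)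
  have hB2 : Real.sqrt (∫ y, (y - b) ^ 2 ∂ν) ^ 2 = ∫ y, (y - b) ^ 2 ∂ν :=
    Real.sq_sqrt (integral_nonneg fun y => sq_nonneg _)
  rw [hexp]
  nlinarith [hCS, hA2, hB2]
end

section
/- Let μ and ν be probability measures on ℝ, with μ having finite second moment, and let μ * ν denote their convolution. Then: (i) the pushforward of ν × μ under the map (x, z) ↦ (x, x + z) is a coupling of ν and μ * ν satisfying ∫ (x − y)² dγ(x,y) = ∫ z² dμ(z); and (ii) if ν = δ_c is the point mass at some c ∈ ℝ, then every coupling γ of ν and μ * ν satisfies ∫ (x − y)² dγ(x,y) = ∫ z² dμ(z). -/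
open MeasureTheory

/-- Smearing by independent noise: with μ * ν realized as the pushforward of
ν × μ under addition, (i) the pushforward γ₀ of ν × μ under (x,z) ↦ (x, x+z) is a
coupling of ν and μ * ν with ∫(x−y)²dγ₀ = ∫z²dμ, and (ii) if ν = δ_c then every
coupling of ν and μ * ν has the same squared deviation ∫z²dμ. -/
theorem smeared_observable_coupling_deviation
    (μ ν : Measure ℝ) [IsProbabilityMeasure μ] [IsProbabilityMeasure ν]
    (hμ : Integrable (fun z => z ^ 2) μ) :
    let conv : Measure ℝ := (ν.prod μ).map (fun p => p.1 + p.2)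
    let γ₀ : Measure (ℝ × ℝ) := (ν.prod μ).map (fun p => (p.1, p.1 + p.2))
    (IsProbabilityMeasure γ₀ ∧ γ₀.map Prod.fst = ν ∧ γ₀.map Prod.snd = conv ∧
      ∫ p : ℝ × ℝ, (p.1 - p.2) ^ 2 ∂γ₀ = ∫ z, z ^ 2 ∂μ) ∧
    (∀ c : ℝ, ν = Measure.dirac c →
      ∀ γ : Measure (ℝ × ℝ), IsProbabilityMeasure γ →
        γ.map Prod.fst = ν → γ.map Prod.snd = conv →
        ∫ p : ℝ × ℝ, (p.1 - p.2) ^ 2 ∂γ = ∫ z, z ^ 2 ∂μ) := by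
  intro conv γ₀
  have hmf : Measurable (fun p : ℝ × ℝ => (p.1, p.1 + p.2)) :=
    measurable_fst.prodMk (measurable_fst.add measurable_snd)
  have hmadd : Measurable (fun p : ℝ × ℝ => p.1 + p.2) :=
    measurable_fst.add measurable_snd
  have hγ₀def : γ₀ = (ν.prod μ).map (fun p => (p.1, p.1 + p.2)) := rfl
  constructor
  · refine ⟨MeasureTheory.Measure.isProbabilityMeasure_map hmf.aemeasurable, ?_, ?_, ?_⟩
    · rw [hγ₀def, Measure.map_map measurable_fst hmf]
      have : (Prod.fst ∘ fun p : ℝ × ℝ => (p.1, p.1 + p.2)) = Prod.fst := rfl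
      rw [this, Measure.map_fst_prod]
      simp
    · rw [hγ₀def, Measure.map_map measurable_snd hmf]
      rfl
    · rw [hγ₀def, integral_map (f := fun p : ℝ × ℝ => (p.1 - p.2) ^ 2) hmf.aemeasurable
        ((measurable_fst.sub measurable_snd).pow_const 2).aestronglyMeasurable]
      simp only
      have h1 : ∀ p : ℝ × ℝ, (p.1 - (p.1 + p.2)) ^ 2 = p.2 ^ 2 := fun p => by ring
      simp_rw [h1]
      have h2 : μ = (ν.prod μ).map Prod.snd := by rw [Measure.map_snd_prod]; simp
      have h3 := integral_map (μ := ν.prod μ) (φ := Prod.snd) (f := fun z : ℝ => z ^ 2)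
        measurable_snd.aemeasurable (by fun_prop)
      conv_rhs => rw [h2, h3]
  · intro c hc γ hγ hfst hsnd
    have h0 : γ.map Prod.fst = Measure.dirac c := by rw [hfst, hc]
    have hae : ∀ᵐ p : ℝ × ℝ ∂γ, p.1 = c := by
      have h1 : (γ.map Prod.fst) {c}ᶜ = 0 := by
        rw [h0, Measure.dirac_apply' _ (measurableSet_singleton c).compl]; simp
      rw [Measure.map_apply measurable_fst (measurableSet_singleton c).compl] at h1
      refine ae_iff.mpr ?_
      simpa [Set.preimage] using h1
    have step1 : ∫ p : ℝ × ℝ, (p.1 - p.2) ^ 2 ∂γ = ∫ p : ℝ × ℝ, (c - p.2) ^ 2 ∂γ :=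
      integral_congr_ae (hae.mono fun p hp => by dsimp only; rw [hp])
    have step2 : ∫ p : ℝ × ℝ, (c - p.2) ^ 2 ∂γ = ∫ y, (c - y) ^ 2 ∂conv := by
      have h3 := integral_map (μ := γ) (φ := Prod.snd) (f := fun y : ℝ => (c - y) ^ 2)
        measurable_snd.aemeasurable (Measurable.aestronglyMeasurable (by fun_prop))
      rw [← hsnd, h3]
    have hconv : conv = μ.map (fun z => c + z) := by
      show (ν.prod μ).map (fun p => p.1 + p.2) = _
      rw [hc, Measure.dirac_prod, Measure.map_map hmadd (measurable_prodMk_left)]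
      rfl
    have step3 : ∫ y, (c - y) ^ 2 ∂conv = ∫ z, z ^ 2 ∂μ := by
      have h4 := integral_map (μ := μ) (φ := fun z : ℝ => c + z) (f := fun y : ℝ => (c - y) ^ 2)
        (by fun_prop) (Measurable.aestronglyMeasurable (by fun_prop))
      rw [hconv, h4]
      have : ∀ z : ℝ, (c - (c + z)) ^ 2 = z ^ 2 := fun z => by ring
      simp_rw [this]
    rw [step1, step2, step3]
end

section
/- Let A be a Hermitian n×n complex matrix with spectral decomposition A = ∑_{a ∈ S} a · P_a, where S is the (finite) set of eigenvalues and P_a the corresponding orthogonal spectral projections (mutually orthogonal, summing to 1). Let (C j)_{j ∈ κ} (κ finite) be a POVM on ℂ^n with values y : κ → ℝ, and suppose A · C j = C j · A for all j. Let ρ be a density matrix and define γ(a, j) = Tr(ρ P_a C j). Then: (i) γ(a, j) is real and nonnegative for all a, j; (ii) ∑_j γ(a, j) = Tr(ρ P_a) for all a, and ∑_{a} γ(a, j) = Tr(ρ C j) for all j (so γ is a coupling of the distributions of A and of C in ρ); and (iii) ∑_{a, j} (a − y(j))² γ(a, j) = Tr(ρ ∑_j y(j)² C j) + Tr(ρ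 A²) − 2 Tr(ρ A ∑_j y(j) C j). -/
open Matrix
open scoped ComplexOrder

lemma my_trace_nonneg {n : ℕ} {M : Matrix (Fin n) (Fin n) ℂ} (h : M.PosSemidef) :
    0 ≤ M.trace := by
  rw [Matrix.trace]
  apply Finset.sum_nonneg
  intro i _
  have := h.2 (Finsupp.single i 1)
  simpa [Matrix.diag, Finsupp.sum_single_index] using this

lemma my_trace_mul_nonneg {n : ℕ} {ρ M : Matrix (Fin n) (Fin n) ℂ}
    (hρ : ρ.PosSemidef) (hM : M.PosSemidef) : 0 ≤ (ρ * M).trace := by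
  obtain ⟨B, rfl⟩ : ∃ B : Matrix (Fin n) (Fin n) ℂ, M = Bᴴ * B := by
    open scoped MatrixOrder in exact CStarAlgebra.nonneg_iff_eq_star_mul_self.mp hM.nonneg
  rw [show ρ * (Bᴴ * B) = ρ * Bᴴ * B by rw [mul_assoc], Matrix.trace_mul_comm]
  exact my_trace_nonneg (by simpa [mul_assoc] using hρ.mul_mul_conjTranspose_same B)

/-- When a POVM (C j) with values y commutes with a sharp target A = ∑ a·P_a, the
bimeasure γ(a,j) = Tr(ρ P_a C j) is a genuine coupling of the outcome
distributions of A and C in the state ρ, and the squared noise-operator error is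
the corresponding mean squared value deviation. -/
theorem commuting_target_noise_error_is_value_deviation {n : ℕ} {κ : Type}
    [Fintype κ]
    (S : Finset ℝ) (P : ℝ → Matrix (Fin n) (Fin n) ℂ)
    (hPproj : ∀ a ∈ S, (P a).IsHermitian ∧ P a * P a = P a)
    (hPorth : ∀ a ∈ S, ∀ b ∈ S, a ≠ b → P a * P b = 0)
    (hPsum : ∑ a ∈ S, P a = 1)
    (A : Matrix (Fin n) (Fin n) ℂ) (hA : A = ∑ a ∈ S, ((a : ℝ) : ℂ) • P a)
    (C : κ → Matrix (Fin n) (Fin n) ℂ)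
    (hCpos : ∀ j, (C j).PosSemidef) (hCsum : ∑ j, C j = 1)
    (y : κ → ℝ) (hcomm : ∀ j, A * C j = C j * A)
    (ρ : Matrix (Fin n) (Fin n) ℂ) (hρ : ρ.PosSemidef) (hρtr : ρ.trace = 1) :
    -- (i) γ(a,j) is real and nonnegative
    (∀ a ∈ S, ∀ j, 0 ≤ (ρ * (P a * C j)).trace) ∧
    -- (ii) γ is a coupling of the distributions of A and C in ρ
    (∀ a ∈ S, ∑ j, (ρ * (P a * C j)).trace = (ρ * P a).trace) ∧
    (∀ j, ∑ a ∈ S, (ρ * (P a * C j)).trace = (ρ * C j).trace) ∧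
    -- (iii) the mean squared value deviation equals the squared NO-error
    (∑ a ∈ S, ∑ j, (((a - y j) ^ 2 : ℝ) : ℂ) * (ρ * (P a * C j)).trace =
      (ρ * ∑ j, (((y j) ^ 2 : ℝ) : ℂ) • C j).trace + (ρ * A ^ 2).trace -
        2 * (ρ * (A * ∑ j, ((y j : ℝ) : ℂ) • C j)).trace) := by
  classical
  -- powers of A
  have hAk : ∀ k : ℕ, A ^ k = ∑ a ∈ S, ((a : ℂ) ^ k) • P a := by
    intro k
    induction k with
    | zero => simp [hPsum]
    | succ k ih =>
      rw [pow_succ, ih, hA, Finset.sum_mul_sum]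
      refine Finset.sum_congr rfl fun a ha => ?_
      rw [Finset.sum_eq_single a (fun b hb hne => ?_) (fun h => absurd ha h)]
      · rw [smul_mul_smul_comm, (hPproj a ha).2, pow_succ]
      · rw [smul_mul_smul_comm, hPorth a ha b hb (Ne.symm hne), smul_zero]
  -- each spectral projection is a polynomial in A
  have hPpoly : ∀ a ∈ S,
      P a = Polynomial.aeval A ((Lagrange.basis S id a).map (algebraMap ℝ ℂ)) := by
    intro a ha
    have haeval : ∀ q : Polynomial ℂ,
        Polynomial.aeval A q = ∑ b ∈ S, q.eval (b : ℂ) • P b := by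
      intro q
      induction q using Polynomial.induction_on' with
      | add p q hp hq =>
        rw [map_add, hp, hq, ← Finset.sum_add_distrib]
        exact Finset.sum_congr rfl fun b _ => by rw [Polynomial.eval_add, add_smul]
      | monomial k c =>
        rw [Polynomial.aeval_monomial, hAk k, Finset.mul_sum]
        refine Finset.sum_congr rfl fun b hb => ?_
        simp [Polynomial.eval_monomial, mul_smul, Algebra.smul_def, mul_assoc]
    rw [haeval]
    rw [Finset.sum_eq_single a (fun b hb hne => ?_) (fun h => absurd ha h)]
    · have h1 : Polynomial.eval a (Lagrange.basis S id a) = 1 :=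
        Lagrange.eval_basis_self (Set.injOn_id _) ha
      rw [show ((a:ℝ):ℂ) = algebraMap ℝ ℂ a from rfl, Polynomial.eval_map,
        Polynomial.eval₂_at_apply, h1]
      simp
    · have h0 : Polynomial.eval b (Lagrange.basis S id a) = 0 :=
        Lagrange.eval_basis_of_ne (v := id) (Ne.symm hne) hb
      rw [show ((b:ℝ):ℂ) = algebraMap ℝ ℂ b from rfl, Polynomial.eval_map,
        Polynomial.eval₂_at_apply, h0]
      simp
  -- spectral projections commute with the POVM elements
  have hPC : ∀ a ∈ S, ∀ j, P a * C j = C j * P a := by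
    intro a ha j
    have hCA : Commute (C j) A := (hcomm j).symm
    have hq : ∀ q : Polynomial ℂ, Commute (C j) (Polynomial.aeval A q) := by
      intro q
      induction q using Polynomial.induction_on' with
      | add p q hp hq => rw [map_add]; exact hp.add_right hq
      | monomial k c =>
        rw [Polynomial.aeval_monomial]
        exact (Algebra.commute_algebraMap_right c (C j)).mul_right (hCA.pow_right k)
    rw [hPpoly a ha]
    exact ((hq _).symm).eq
  -- the coupling property
  have hcoup1 : ∀ a ∈ S, ∑ j, (ρ * (P a * C j)).trace = (ρ * P a).trace := by
    intro a ha
    rw [← Matrix.trace_sum, ← Matrix.mul_sum, ← Matrix.mul_sum, hCsum, mul_one]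
  have hcoup2 : ∀ j, ∑ a ∈ S, (ρ * (P a * C j)).trace = (ρ * C j).trace := by
    intro j
    rw [← Matrix.trace_sum, ← Matrix.mul_sum, ← Matrix.sum_mul, hPsum, one_mul]
  refine ⟨?_, hcoup1, hcoup2, ?_⟩
  · -- (i) nonnegativity
    intro a ha j
    have h1 : (P a)ᴴ * C j * P a = P a * C j := by
      rw [(hPproj a ha).1.eq, mul_assoc, ← hPC a ha j, ← mul_assoc, (hPproj a ha).2]
    have hps : (P a * C j).PosSemidef := by
      rw [← h1]; exact (hCpos j).conjTranspose_mul_mul_same (P a)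
    exact my_trace_mul_nonneg hρ hps
  · -- (iii)
    have hT2 : (ρ * ∑ j, (((y j) ^ 2 : ℝ) : ℂ) • C j).trace
        = ∑ j, ((y j : ℂ)) ^ 2 * ∑ a ∈ S, (ρ * (P a * C j)).trace := by
      rw [Matrix.mul_sum, Matrix.trace_sum]
      refine Finset.sum_congr rfl fun j _ => ?_
      rw [Matrix.mul_smul, Matrix.trace_smul, hcoup2 j, smul_eq_mul]
      push_cast
      ring
    have hT1 : (ρ * A ^ 2).trace
        = ∑ a ∈ S, ((a : ℂ)) ^ 2 * ∑ j, (ρ * (P a * C j)).trace := by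
      rw [hAk 2, Matrix.mul_sum, Matrix.trace_sum]
      refine Finset.sum_congr rfl fun a ha => ?_
      rw [Matrix.mul_smul, Matrix.trace_smul, hcoup1 a ha, smul_eq_mul]
    have hT3 : (ρ * (A * ∑ j, ((y j : ℝ) : ℂ) • C j)).trace
        = ∑ a ∈ S, ∑ j, (a : ℂ) * (y j : ℂ) * (ρ * (P a * C j)).trace := by
      simp only [hA, Matrix.sum_mul, Matrix.mul_sum, Matrix.mul_smul, smul_mul_assoc,
        Matrix.smul_mul, Matrix.trace_sum, Matrix.trace_smul, smul_smul, smul_eq_mul,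
        Finset.mul_sum]
      rw [Finset.sum_comm]
      refine Finset.sum_congr rfl fun a _ => Finset.sum_congr rfl fun j _ => by ring
    rw [hT2, hT1, hT3]
    simp only [Finset.mul_sum]
    rw [show (∑ j, ∑ a ∈ S, ((y j : ℂ)) ^ 2 * (ρ * (P a * C j)).trace)
        = ∑ a ∈ S, ∑ j, ((y j : ℂ)) ^ 2 * (ρ * (P a * C j)).trace from Finset.sum_comm]
    rw [← Finset.sum_add_distrib, ← Finset.sum_sub_distrib]
    refine Finset.sum_congr rfl fun a _ => ?_
    rw [← Finset.sum_add_distrib, ← Finset.sum_sub_distrib]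
    refine Finset.sum_congr rfl fun j _ => ?_
    push_cast
    ring
end
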